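/- arXiv:2206.01280 — 11 statements merged into one kernel-verified Lean document; each statement's English description precedes it below -/
import Mathlib

section
/- Let φ be a 2-CNF and let ψ be obtained from φ by replacing every clause (ℓ ∨ ℓ') by the two clauses (ℓ ∨ ℓ') and (¬ℓ ∨ ¬ℓ'). Then for every k ≥ 0: there exists a multiset of at most k clauses of φ whose removal leaves φ nae-satisfiable if and only if there exists a multiset of at most k clauses of ψ whose removal leaves ψ satisfiable. -/
open Multiset

namespace AlmostNae

def negC (C : Finset (ℕ × Bool)) : Finset (ℕ × Bool) := C.image (fun l => (l.1, !l.2))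

def sat (β : ℕ → Bool) (C : Finset (ℕ × Bool)) : Prop := ∃ l ∈ C, β l.1 = l.2

instance satDec (β : ℕ → Bool) : DecidablePred (sat β) := fun C =>
  decidable_of_iff (∃ l ∈ C, β l.1 = l.2) Iff.rfl

lemma sat_negC {β : ℕ → Bool} {C : Finset (ℕ × Bool)} :
    sat β (negC C) ↔ ∃ l ∈ C, β l.1 ≠ l.2 := by
  constructor
  · rintro ⟨l, hl, hβ⟩
    rcases Finset.mem_image.mp hl with ⟨a, ha, rfl⟩
    exact ⟨a, ha, by simp at hβ; simp [hβ]⟩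
  · rintro ⟨l, hl, hβ⟩
    exact ⟨(l.1, !l.2), Finset.mem_image.mpr ⟨l, hl, rfl⟩, by
      cases h : β l.1 <;> cases h2 : l.2 <;> simp_all⟩

lemma map_le_bind {α γ : Type*} (s : Multiset α) (f : α → γ) (g : α → Multiset γ)
    (h : ∀ a ∈ s, f a ∈ g a) : s.map f ≤ s.bind g := by
  induction s using Multiset.induction_on with
  | empty => simp
  | cons a s ih =>
    simp only [Multiset.map_cons, Multiset.cons_bind]
    calc f a ::ₘ s.map f = {f a} + s.map f := by rw [Multiset.singleton_add]
    _ ≤ g a + s.bind g :=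
      add_le_add (Multiset.singleton_le.mpr (h a (Multiset.mem_cons_self ..)))
        (ih fun a ha => h a (Multiset.mem_cons_of_mem ha))

lemma card_filter_le (β : ℕ → Bool) (φ : Multiset (Finset (ℕ × Bool))) :
    Multiset.card (φ.filter (fun C => ¬ (sat β C ∧ sat β (negC C)))) ≤
    Multiset.card ((φ.bind (fun C => ({C, negC C} : Multiset _))).filter
      (fun C => ¬ sat β C)) := by
  classical
  induction φ using Multiset.induction_on with
  | empty => simp
  | cons a s ih =>
    rw [Multiset.filter_cons, Multiset.cons_bind, Multiset.filter_add,
      Multiset.card_add, Multiset.card_add]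
    refine Nat.add_le_add ?_ ih
    by_cases h : sat β a ∧ sat β (negC a)
    · simp [h]
    · have h1 : ¬ sat β a ∨ ¬ sat β (negC a) := by tauto
      have hx : ∃ x ∈ ({a, negC a} : Multiset _), ¬ sat β x := by
        rcases h1 with h1 | h1
        · exact ⟨a, by simp, h1⟩
        · exact ⟨negC a, by simp, h1⟩
      obtain ⟨x, hxm, hxs⟩ := hx
      have hmem : x ∈ Multiset.filter (fun C => ¬ sat β C) ({a, negC a} : Multiset _) :=
        Multiset.mem_filter.mpr ⟨hxm, hxs⟩
      have hpos := Multiset.card_pos_iff_exists_mem.mpr ⟨x, hmem⟩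
      simp only [h, not_false_iff, if_pos, Multiset.card_singleton]
      omega

end AlmostNae

open AlmostNae

/-- Let `ψ` be obtained from a 2-CNF `φ` by replacing every clause
`(ℓ ∨ ℓ')` by the two clauses `(ℓ ∨ ℓ')` and `(¬ℓ ∨ ¬ℓ')`.  Then for every `k`,
one can remove at most `k` clauses from `φ` leaving it nae-satisfiable iff one can
remove at most `k` clauses from `ψ` leaving it satisfiable. -/
theorem almost_nae_2sat_to_almost_2sat (φ : Multiset (Finset (ℕ × Bool)))
    (h2 : ∀ C ∈ φ, C.card = 2) (k : ℕ) :
    (∃ D ≤ φ, Multiset.card D ≤ k ∧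
      ∃ β : ℕ → Bool, ∀ C ∈ φ - D,
        (∃ l ∈ C, β l.1 = l.2) ∧ (∃ l ∈ C, β l.1 ≠ l.2)) ↔
    (∃ D' ≤ φ.bind (fun C => {C, C.image (fun l => (l.1, !l.2))}),
      Multiset.card D' ≤ k ∧
      ∃ β : ℕ → Bool,
        ∀ C ∈ φ.bind (fun C => {C, C.image (fun l => (l.1, !l.2))}) - D',
          ∃ l ∈ C, β l.1 = l.2) := by
  classical
  have hpairs : ∀ C : Finset (ℕ × Bool),
      ({C, C.image (fun l => (l.1, !l.2))} : Multiset _) = {C, negC C} := fun C => rfl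
  constructor
  · rintro ⟨D, hD, hcard, β, hβ⟩
    obtain ⟨E, rfl⟩ := Multiset.le_iff_exists_add.mp hD
    set pick : Finset (ℕ × Bool) → Finset (ℕ × Bool) :=
      fun C => if sat β C then negC C else C with hpick
    set other : Finset (ℕ × Bool) → Finset (ℕ × Bool) :=
      fun C => if sat β C then C else negC C with hother
    have hpair_split : ∀ C : Finset (ℕ × Bool),
        ({C, negC C} : Multiset _) = {pick C} + {other C} := by
      intro C
      by_cases h : sat β C <;> simp [hpick, hother, h, Multiset.insert_eq_cons]
      · exact Multiset.cons_swap _ _ _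
    have hbindD : D.bind (fun C => ({C, negC C} : Multiset _))
        = D.map pick + D.map other := by
      rw [show (fun C => ({C, negC C} : Multiset _))
            = fun C => ({pick C} : Multiset _) + {other C} from funext hpair_split,
          Multiset.bind_add, Multiset.bind_singleton, Multiset.bind_singleton]
    refine ⟨D.map pick, ?_, by simpa using hcard, β, ?_⟩
    · simp only [hpairs, Multiset.add_bind]
      calc D.map pick ≤ D.bind (fun C => ({C, negC C} : Multiset _)) :=
            map_le_bind _ _ _ (by
              intro a _; by_cases h : sat β a <;> simp [hpick, h])
        _ ≤ _ := le_add_right _ _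
    · intro C hC
      simp only [hpairs, Multiset.add_bind, hbindD] at hC
      rw [show D.map pick + D.map other + E.bind (fun C => ({C, negC C} : Multiset _))
            = D.map pick + (D.map other + E.bind (fun C => ({C, negC C} : Multiset _)))
          from add_assoc _ _ _, add_tsub_cancel_left] at hC
      rcases Multiset.mem_add.mp hC with hC | hC
      · rcases Multiset.mem_map.mp hC with ⟨a, ha, rfl⟩
        have haφ : a ∈ D + E := Multiset.mem_add.mpr (Or.inl ha)
        by_cases h : sat β a
        · simp only [hother, if_pos h]; exact h
        · simp only [hother, h, if_false]
          rw [show (∃ l ∈ negC a, β l.1 = l.2) ↔ sat β (negC a) from Iff.rfl, sat_negC]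
          have hcard2 : a.card = 2 := h2 a haφ
          have : a.Nonempty := Finset.card_pos.mp (by omega)
          obtain ⟨l, hl⟩ := this
          exact ⟨l, hl, fun heq => h ⟨l, hl, heq⟩⟩
      · rcases Multiset.mem_bind.mp hC with ⟨a, ha, hCa⟩
        have haφD : a ∈ (D + E) - D := by rwa [add_tsub_cancel_left]
        obtain ⟨hs, hn⟩ := hβ a haφD
        rcases Multiset.mem_cons.mp hCa with rfl | hCa
        · exact hs
        · rw [Multiset.mem_singleton] at hCa
          subst hCa
          exact sat_negC.mpr hn
  · rintro ⟨D', hD', hcard, β, hβ⟩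
    set ψ := φ.bind (fun C => ({C, negC C} : Multiset _)) with hψ
    have hψ' : φ.bind (fun C => {C, C.image (fun l => (l.1, !l.2))}) = ψ := rfl
    set nae : Finset (ℕ × Bool) → Prop := fun C => sat β C ∧ sat β (negC C) with hnae
    set D := φ.filter (fun C => ¬ nae C) with hDdef
    -- every unsatisfied clause of ψ is entirely inside D'
    have hsub : ψ.filter (fun C => ¬ sat β C) ≤ D' := by
      rw [Multiset.le_iff_count]
      intro a
      by_cases h : sat β a
      · simp [Multiset.count_filter, h]
      · rw [Multiset.count_filter, if_pos h]
        have hnot : a ∉ φ.bind (fun C => {C, C.image (fun l => (l.1, !l.2))}) - D' :=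
          fun hm => h (hβ a hm)
        have := Multiset.count_eq_zero.mpr hnot
        rw [hψ'] at this
        rw [Multiset.count_sub] at this
        omega
    have hcardDψ : Multiset.card D ≤ Multiset.card (ψ.filter (fun C => ¬ sat β C)) := by
      exact card_filter_le β φ
    refine ⟨D, Multiset.filter_le _ _, ?_, β, ?_⟩
    · calc Multiset.card D ≤ _ := hcardDψ
        _ ≤ Multiset.card D' := Multiset.card_le_card hsub
        _ ≤ k := hcard
    · intro C hC
      have hpos : 0 < Multiset.count C (φ - D) := Multiset.count_pos.mpr hC
      rw [Multiset.count_sub] at hpos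
      by_contra hcon
      have hnaeC : ¬ nae C := by
        rw [hnae]
        intro ⟨h1, h3⟩
        exact hcon ⟨h1, sat_negC.mp h3⟩
      have : Multiset.count C D = Multiset.count C φ := by
        rw [hDdef, Multiset.count_filter, if_pos hnaeC]
      omega
end

section
/- Let φ be a CNF formula with m clauses, and let G(φ) be the graph whose vertices are the clauses of φ, with an edge between two clauses whenever they contain complementary literals (some variable occurs positively in one and negatively in the other). Then for every k ≥ 0, there exists an assignment satisfying at most k clauses of φ if and only if G(φ) has a vertex cover of size at most k. -/
/-- For a CNF `φ` (with `m` clauses, none containing a complementary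
pair of literals) let `G(φ)` be the graph on the clauses of `φ` with an edge between
two clauses whenever they contain complementary literals.  Then some assignment
satisfies at most `k` clauses of `φ` iff `G(φ)` has a vertex cover of size at most
`k`. -/
theorem minsat_iff_vertex_cover (m : ℕ) (φ : Fin m → Finset (ℕ × Bool))
    (htaut : ∀ i : Fin m, ∀ x : ℕ, ¬ ((x, true) ∈ φ i ∧ (x, false) ∈ φ i))
    (k : ℕ) :
    (∃ β : ℕ → Bool,
      (Finset.univ.filter (fun i => ∃ l ∈ φ i, β l.1 = l.2)).card ≤ k) ↔
    (∃ S : Finset (Fin m), S.card ≤ k ∧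
      ∀ i j : Fin m, i ≠ j →
        (∃ x : ℕ, ((x, true) ∈ φ i ∧ (x, false) ∈ φ j) ∨
                  ((x, true) ∈ φ j ∧ (x, false) ∈ φ i)) →
        i ∈ S ∨ j ∈ S) := by
  classical
  constructor
  · rintro ⟨β, hβ⟩
    refine ⟨Finset.univ.filter (fun i => ∃ l ∈ φ i, β l.1 = l.2), hβ, ?_⟩
    rintro i j _ ⟨x, hx⟩
    rcases hx with ⟨h1, h2⟩ | ⟨h1, h2⟩
    · cases hb : β x
      · exact Or.inr (Finset.mem_filter.2 ⟨Finset.mem_univ _, ⟨(x, false), h2, hb⟩⟩)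
      · exact Or.inl (Finset.mem_filter.2 ⟨Finset.mem_univ _, ⟨(x, true), h1, hb⟩⟩)
    · cases hb : β x
      · exact Or.inl (Finset.mem_filter.2 ⟨Finset.mem_univ _, ⟨(x, false), h2, hb⟩⟩)
      · exact Or.inr (Finset.mem_filter.2 ⟨Finset.mem_univ _, ⟨(x, true), h1, hb⟩⟩)
  · rintro ⟨S, hS, hcov⟩
    set β : ℕ → Bool := fun x =>
      if ∃ i : Fin m, i ∉ S ∧ (x, false) ∈ φ i then true else false with hβdef
    refine ⟨β, le_trans (Finset.card_le_card ?_) hS⟩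
    intro i hi
    rcases Finset.mem_filter.1 hi with ⟨-, ⟨⟨x, b⟩, hl, hval⟩⟩
    by_contra hiS
    cases b with
    | false =>
      have : β x = true := if_pos ⟨i, hiS, hl⟩
      simp_all
    | true =>
      by_cases hex : ∃ j : Fin m, j ∉ S ∧ (x, false) ∈ φ j
      · rcases hex with ⟨j, hjS, hj⟩
        rcases eq_or_ne i j with rfl | hij
        · exact htaut i x ⟨hl, hj⟩
        · rcases hcov i j hij ⟨x, Or.inl ⟨hl, hj⟩⟩ with h | h
          · exact hiS h
          · exact hjS h
      · have : β x = false := if_neg hex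
        simp_all
end

section
/- Let G = (V,E) be a directed graph with designated vertices s ≠ t, let f be a 0-1 flow from s to t in G, and let R_f be the residual graph of f. If there is a (simple) directed path from s to t in R_f, then there exists a 0-1 flow f' from s to t in G with value |f'| = |f| + 1. -/
/-!
Along a simple residual path `s = x₀, x₁, …, xₖ = t`, each step either saturates a free forward
edge `(xᵢ, xᵢ₊₁)` or empties a used edge `(xᵢ₊₁, xᵢ)`. Either way the net outflow rises by one at
`xᵢ` and falls by one at `xᵢ₊₁`, so these changes telescope to `+1` at `s` and `-1` at `t`.
Simplicity of the path guarantees that no edge is changed twice, so each step sees the original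
value of its edge. A residual walk is shortened to a simple path by cutting out loops.
-/

open Finset List

theorem List.exists_nodup_isChain_of_reflTransGen {α : Type*} {r : α → α → Prop} {a b : α}
    (h : Relation.ReflTransGen r a b) :
    ∃ l, (a :: l).IsChain r ∧ (a :: l).Nodup ∧ (a :: l).getLast (cons_ne_nil _ _) = b := by
  induction h using Relation.ReflTransGen.head_induction_on with
  | refl => exact ⟨[], .singleton _, nodup_singleton _, rfl⟩
  | @head a c hac _ ih =>
    obtain ⟨l, hchain, hnodup, hlast⟩ := ih
    by_cases ha : a ∈ c :: l
    · obtain ⟨l₁, l₂, hsplit⟩ := append_of_mem ha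
      rw [hsplit] at hchain hnodup
      refine ⟨l₂, (isChain_split.mp hchain).2, hnodup.of_append_right, ?_⟩
      simpa [hsplit] using hlast
    · exact ⟨c :: l, .cons_cons hac hchain, nodup_cons.mpr ⟨ha, hnodup⟩,
        by rwa [getLast_cons_cons]⟩

section Flow

variable {V : Type}

structure IsZeroOneOn (E : Finset (V × V)) (h : V → V → ℕ) : Prop where
  eq_zero_of_notMem : ∀ u v, (u, v) ∉ E → h u v = 0
  le_one : ∀ u v, h u v ≤ 1

def ResidualAdj (E : Finset (V × V)) (h : V → V → ℕ) (a b : V) : Prop :=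
  ((a, b) ∈ E ∧ h a b = 0) ∨ ((b, a) ∈ E ∧ h b a = 1)

theorem residualAdj_congr {E : Finset (V × V)} {h h' : V → V → ℕ} {a b : V}
    (hab : h' a b = h a b) (hba : h' b a = h b a) :
    ResidualAdj E h' a b ↔ ResidualAdj E h a b := by
  simp only [ResidualAdj, hab, hba]

section SetEdge

variable [DecidableEq V]

def setEdge (h : V → V → ℕ) (p q : V) (c : ℕ) : V → V → ℕ :=
  fun u w => if u = p ∧ w = q then c else h u w

theorem eq_of_setEdge_apply_ne {h : V → V → ℕ} {p q u w : V} (c : ℕ)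
    (hne : setEdge h p q c u w ≠ h u w) : u = p ∧ w = q := by
  by_contra huw
  exact hne (if_neg huw)

theorem natCast_setEdge (h : V → V → ℕ) (p q : V) (c : ℕ) (u w : V) :
    (setEdge h p q c u w : ℤ) = h u w + if u = p ∧ w = q then (c : ℤ) - h p q else 0 := by
  unfold setEdge
  split_ifs with huw
  · obtain ⟨rfl, rfl⟩ := huw
    ring
  · simp

theorem IsZeroOneOn.setEdge {E : Finset (V × V)} {h : V → V → ℕ} (hh : IsZeroOneOn E h)
    {p q : V} {c : ℕ} (hpq : (p, q) ∈ E) (hc : c ≤ 1) : IsZeroOneOn E (setEdge h p q c) where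
  eq_zero_of_notMem u w huw := by
    have hne : ¬(u = p ∧ w = q) := by rintro ⟨rfl, rfl⟩; exact huw hpq
    simpa [_root_.setEdge, hne] using hh.eq_zero_of_notMem u w huw
  le_one u w := by
    unfold _root_.setEdge
    split_ifs
    exacts [hc, hh.le_one u w]

end SetEdge

variable [Fintype V]

def netFlow (h : V → V → ℕ) (v : V) : ℤ :=
  ∑ w, (h v w : ℤ) - ∑ u, (h u v : ℤ)

theorem netFlow_eq_zero_iff {h : V → V → ℕ} {v : V} :
    netFlow h v = 0 ↔ ∑ u, h u v = ∑ w, h v w := by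
  rw [netFlow, sub_eq_zero, eq_comm]
  exact_mod_cast Iff.rfl

variable [DecidableEq V]

theorem netFlow_setEdge (h : V → V → ℕ) (p q : V) (c : ℕ) (v : V) :
    netFlow (setEdge h p q c) v =
      netFlow h v + ((c : ℤ) - h p q) * ((if v = p then 1 else 0) - if v = q then 1 else 0) := by
  simp only [netFlow, natCast_setEdge, sum_add_distrib, ite_and, sum_ite_eq', sum_ite_irrel,
    mem_univ, if_true, sum_const_zero]
  split_ifs <;> ring

theorem ResidualAdj.exists_augment {E : Finset (V × V)} {h : V → V → ℕ} (hh : IsZeroOneOn E h)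
    {a b : V} (hab : ResidualAdj E h a b) :
    ∃ h', IsZeroOneOn E h' ∧ (∀ u w, h' u w ≠ h u w → u ∈ [a, b] ∧ w ∈ [a, b]) ∧
      ∀ v, netFlow h' v = netFlow h v + (if v = a then 1 else 0) - if v = b then 1 else 0 := by
  rcases hab with ⟨hmem, hzero⟩ | ⟨hmem, hone⟩
  · refine ⟨setEdge h a b 1, hh.setEdge hmem le_rfl, fun u w hne => ?_, fun v => ?_⟩
    · obtain ⟨rfl, rfl⟩ := eq_of_setEdge_apply_ne 1 hne
      simp
    · rw [netFlow_setEdge, hzero]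
      ring
  · refine ⟨setEdge h b a 0, hh.setEdge hmem zero_le_one, fun u w hne => ?_, fun v => ?_⟩
    · obtain ⟨rfl, rfl⟩ := eq_of_setEdge_apply_ne 0 hne
      simp
    · rw [netFlow_setEdge, hone]
      ring

theorem exists_augment_of_isChain {E : Finset (V × V)} {f : V → V → ℕ} (hf : IsZeroOneOn E f) :
    ∀ (x : V) (l : List V), (x :: l).IsChain (ResidualAdj E f) → (x :: l).Nodup →
      ∃ f', IsZeroOneOn E f' ∧ (∀ u w, f' u w ≠ f u w → u ∈ x :: l ∧ w ∈ x :: l) ∧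
        ∀ v, netFlow f' v = netFlow f v + (if v = x then 1 else 0)
          - if v = (x :: l).getLast (cons_ne_nil _ _) then 1 else 0
  | x, [], _, _ => ⟨f, hf, fun _ _ hne => absurd rfl hne,
      fun v => by rw [getLast_singleton, add_sub_cancel_right]⟩
  | x, b :: l, hchain, hnodup => by
    rw [isChain_cons_cons] at hchain
    obtain ⟨hxl, hnodup⟩ := nodup_cons.mp hnodup
    obtain ⟨g, hg, hg_eq, hg_net⟩ := exists_augment_of_isChain hf b l hchain.2 hnodup
    have hfix : ∀ w, g x w = f x w ∧ g w x = f w x := fun w =>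
      ⟨by_contra fun hne => hxl (hg_eq x w hne).1, by_contra fun hne => hxl (hg_eq w x hne).2⟩
    have hxb : ResidualAdj E g x b := (residualAdj_congr (hfix b).1 (hfix b).2).mpr hchain.1
    obtain ⟨f', hf', hf'_eq, hf'_net⟩ := hxb.exists_augment hg
    refine ⟨f', hf', fun u w hne => ?_, fun v => ?_⟩
    · by_cases hgf : f' u w = g u w
      · have := hg_eq u w (hgf ▸ hne)
        exact ⟨mem_cons_of_mem _ this.1, mem_cons_of_mem _ this.2⟩
      · have := hf'_eq u w hgf
        simp only [List.mem_cons, List.not_mem_nil, or_false] at this ⊢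
        tauto
    · rw [hf'_net, hg_net, getLast_cons_cons]
      ring

end Flow

theorem augmenting_path_increases_flow_general {V : Type} [Fintype V] [DecidableEq V]
    (E : Finset (V × V)) (s t : V) (hst : s ≠ t)
    (f : V → V → ℕ)
    (hsupp : ∀ u v, (u, v) ∉ E → f u v = 0)
    (hcap : ∀ u v, f u v ≤ 1)
    (hcons : ∀ v, v ≠ s → v ≠ t → ∑ u, f u v = ∑ w, f v w)
    (hpath : Relation.ReflTransGen
      (fun a b => ((a, b) ∈ E ∧ f a b = 0) ∨ ((b, a) ∈ E ∧ f b a = 1)) s t) :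
    ∃ f' : V → V → ℕ,
      (∀ u v, (u, v) ∉ E → f' u v = 0) ∧
      (∀ u v, f' u v ≤ 1) ∧
      (∀ v, v ≠ s → v ≠ t → ∑ u, f' u v = ∑ w, f' v w) ∧
      ((∑ v, f' s v : ℤ) - ∑ u, f' u s = ((∑ v, f s v : ℤ) - ∑ u, f u s) + 1) := by
  obtain ⟨l, hchain, hnodup, hlast⟩ := List.exists_nodup_isChain_of_reflTransGen hpath
  obtain ⟨f', ⟨hsupp', hcap'⟩, -, hnet⟩ :=
    exists_augment_of_isChain ⟨hsupp, hcap⟩ s l hchain hnodup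
  rw [hlast] at hnet
  refine ⟨f', hsupp', hcap', fun v hvs hvt => ?_, ?_⟩
  · rw [← netFlow_eq_zero_iff, hnet, netFlow_eq_zero_iff.mpr (hcons v hvs hvt)]
    simp [hvs, hvt]
  · simpa [netFlow, hst] using hnet s

/-- If `f` is a 0-1 flow from `s` to `t` in a digraph `G = (V,E)`
(no pair of antiparallel edges) and the residual graph `R_f` contains a directed
path from `s` to `t`, then there is a 0-1 flow `f'` of value `|f| + 1`. -/
theorem augmenting_path_increases_flow {V : Type} [Fintype V] [DecidableEq V]
    (E : Finset (V × V)) (s t : V) (hst : s ≠ t)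
    (hanti : ∀ u v : V, (u, v) ∈ E → (v, u) ∉ E)
    (f : V → V → ℕ)
    (hsupp : ∀ u v, (u, v) ∉ E → f u v = 0)
    (hcap : ∀ u v, f u v ≤ 1)
    (hcons : ∀ v, v ≠ s → v ≠ t → ∑ u, f u v = ∑ w, f v w)
    (hpath : Relation.ReflTransGen
      (fun a b => ((a, b) ∈ E ∧ f a b = 0) ∨ ((b, a) ∈ E ∧ f b a = 1)) s t) :
    ∃ f' : V → V → ℕ,
      (∀ u v, (u, v) ∉ E → f' u v = 0) ∧
      (∀ u v, f' u v ≤ 1) ∧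
      (∀ v, v ≠ s → v ≠ t → ∑ u, f' u v = ∑ w, f' v w) ∧
      ((∑ v, f' s v : ℤ) - ∑ u, f' u s = ((∑ v, f s v : ℤ) - ∑ u, f u s) + 1) :=
  augmenting_path_increases_flow_general E s t hst f hsupp hcap hcons hpath
end

section
/- Let G = (V,E) be an undirected graph and H = (V', E') its Hochbaum network. If β : E → ℚ≥0 is a feasible solution of the matching LP of G (i.e., Σ_{e ∋ v} β(e) ≤ 1 for every v ∈ V and 0 ≤ β(e) ≤ 1 for every e ∈ E), then the map f_β defined by f_β(s,v₁) = f_β(v₂,t) = Σ_{w ∈ N(v)} β({v,w}) and f_β(u₁,v₂) = f_β(v₁,u₂) = β({u,v}) is a feasible s-t flow in H (capacities 1 on all edges) of value |f_β| = 2·Σ_{e ∈ E} β(e). -/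
/-- Vertices of the Hochbaum network of a graph on `V`:
`Sum.inl (v, false)` is `v₁`, `Sum.inl (v, true)` is `v₂`,
`Sum.inr false` is the source `s`, `Sum.inr true` is the sink `t`. -/
def HochbaumEdge {V : Type} (G : SimpleGraph V) :
    (V × Bool ⊕ Bool) → (V × Bool ⊕ Bool) → Prop := fun a b =>
  (∃ v : V, a = Sum.inr false ∧ b = Sum.inl (v, false)) ∨
  (∃ v : V, a = Sum.inl (v, true) ∧ b = Sum.inr true) ∨
  (∃ u v : V, G.Adj u v ∧ a = Sum.inl (u, false) ∧ b = Sum.inl (v, true))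

/-- The flow `f_β` on the Hochbaum network induced by a matching-LP solution `β`
(given as a symmetric function on pairs of vertices supported on edges):
`f_β(s,v₁) = f_β(v₂,t) = Σ_w β(v,w)` and `f_β(u₁,v₂) = β(u,v)`. -/
def hochbaumFlow {V : Type} [Fintype V] (β : V → V → ℚ) :
    (V × Bool ⊕ Bool) → (V × Bool ⊕ Bool) → ℚ
  | Sum.inr false, Sum.inl (v, false) => ∑ u, β v u
  | Sum.inl (v, true), Sum.inr true => ∑ u, β v u
  | Sum.inl (u, false), Sum.inl (v, true) => β u v
  | _, _ => 0

/-- If `β` is a feasible solution of the matching LP of `G`, then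
`f_β` is a feasible `s`-`t` flow (unit capacities) in the Hochbaum network of `G`
of value `2·Σ_{e ∈ E} β(e)` (the double sum below counts every edge twice). -/
theorem matching_lp_to_hochbaum_flow {V : Type} [Fintype V] [DecidableEq V]
    (G : SimpleGraph V) (β : V → V → ℚ)
    (hsymm : ∀ u v, β u v = β v u)
    (hsupp : ∀ u v, ¬ G.Adj u v → β u v = 0)
    (hnonneg : ∀ u v, 0 ≤ β u v) (hone : ∀ u v, β u v ≤ 1)
    (hdeg : ∀ v, ∑ u, β v u ≤ 1) :
    (∀ a b, 0 ≤ hochbaumFlow β a b) ∧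
    (∀ a b, ¬ HochbaumEdge G a b → hochbaumFlow β a b = 0) ∧
    (∀ a b, hochbaumFlow β a b ≤ 1) ∧
    (∀ a, a ≠ Sum.inr false → a ≠ Sum.inr true →
      ∑ b, hochbaumFlow β b a = ∑ b, hochbaumFlow β a b) ∧
    (∑ b, hochbaumFlow β (Sum.inr false) b = ∑ u, ∑ v, β u v) := by
  have hdegnn : ∀ v : V, (0:ℚ) ≤ ∑ u, β v u := fun v =>
    Finset.sum_nonneg fun u _ => hnonneg v u
  refine ⟨?_, ?_, ?_, ?_, ?_⟩
  · rintro (⟨u, _ | _⟩ | _ | _) (⟨v, _ | _⟩ | _ | _) <;>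
      simp [hochbaumFlow, hnonneg, hdegnn]
  · rintro (⟨u, _ | _⟩ | _ | _) (⟨v, _ | _⟩ | _ | _) h <;>
      simp [hochbaumFlow, HochbaumEdge] at h ⊢ <;>
      exact hsupp _ _ h
  · rintro (⟨u, _ | _⟩ | _ | _) (⟨v, _ | _⟩ | _ | _) <;>
      simp [hochbaumFlow, hone, hdeg]
  · rintro (⟨v, _ | _⟩ | _ | _) h1 h2 <;> simp_all <;>
      simp [hochbaumFlow, Fintype.sum_sum_type, Fintype.sum_prod_type,
        Fintype.sum_bool]
    · exact Finset.sum_congr rfl fun u _ => hsymm u v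
  · simp [hochbaumFlow, Fintype.sum_sum_type, Fintype.sum_prod_type,
      Fintype.sum_bool]
end

section
/- Let G = (V,E) be an undirected graph and H its Hochbaum network. If f is a feasible s-t flow in H (all capacities 1), then β_f defined by β_f({u,v}) = (f(u₁,v₂) + f(v₁,u₂))/2 is a feasible solution of the matching LP of G with value Σ_{e ∈ E} β_f(e) = |f|/2. Moreover, if f takes values in {0,1}, then β_f is half-integral. -/
/-- The matching-LP solution `β_f` induced by a flow `f` on the Hochbaum network:
`β_f({u,v}) = (f(u₁,v₂) + f(v₁,u₂))/2`. -/
def betaOfFlow {V : Type} (f : (V × Bool ⊕ Bool) → (V × Bool ⊕ Bool) → ℚ)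
    (u v : V) : ℚ :=
  (f (Sum.inl (u, false)) (Sum.inl (v, true)) +
   f (Sum.inl (v, false)) (Sum.inl (u, true))) / 2

/-- If `f` is a feasible `s`-`t` flow in the Hochbaum network of `G`
(all capacities 1), then `β_f` is a feasible solution of the matching LP of `G` of
value `|f|/2` (the double sum counts every edge twice, so it equals `|f|`);
moreover if `f` is 0-1 valued then `β_f` is half-integral. -/
theorem hochbaum_flow_to_matching_lp {V : Type} [Fintype V] [DecidableEq V]
    (G : SimpleGraph V)
    (f : (V × Bool ⊕ Bool) → (V × Bool ⊕ Bool) → ℚ)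
    (hsupp : ∀ a b, ¬ HochbaumEdge G a b → f a b = 0)
    (hnonneg : ∀ a b, 0 ≤ f a b) (hcap : ∀ a b, f a b ≤ 1)
    (hcons : ∀ a, a ≠ Sum.inr false → a ≠ Sum.inr true →
      ∑ b, f b a = ∑ b, f a b) :
    (∀ u v, betaOfFlow f u v = betaOfFlow f v u) ∧
    (∀ u v, ¬ G.Adj u v → betaOfFlow f u v = 0) ∧
    (∀ u v, 0 ≤ betaOfFlow f u v ∧ betaOfFlow f u v ≤ 1) ∧
    (∀ v, ∑ u, betaOfFlow f v u ≤ 1) ∧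
    (∑ u, ∑ v, betaOfFlow f u v = ∑ b, f (Sum.inr false) b) ∧
    ((∀ a b, f a b = 0 ∨ f a b = 1) →
      ∀ u v, ∃ i : ℕ, betaOfFlow f u v = (i : ℚ) / 2) := by
  -- zero lemmas
  have zInlToV1 : ∀ (x : V × Bool) (v : V), f (Sum.inl x) (Sum.inl (v, false)) = 0 := by
    intro x v; apply hsupp
    rintro (⟨w, h1, h2⟩ | ⟨w, h1, h2⟩ | ⟨a, b, _, h1, h2⟩) <;>
      simp_all only [Sum.inl.injEq, Sum.inr.injEq, Prod.mk.injEq, reduceCtorEq,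
        Bool.false_eq_true, Bool.true_eq_false, and_false, false_and, and_true, true_and]
  have zFromT : ∀ b, f (Sum.inr true) b = 0 := by
    intro b; apply hsupp
    rintro (⟨w, h1, h2⟩ | ⟨w, h1, h2⟩ | ⟨a, b, _, h1, h2⟩) <;>
      simp_all only [Sum.inl.injEq, Sum.inr.injEq, Prod.mk.injEq, reduceCtorEq,
        Bool.false_eq_true, Bool.true_eq_false, and_false, false_and, and_true, true_and]
  have zToS : ∀ b, f b (Sum.inr false) = 0 := by
    intro b; apply hsupp
    rintro (⟨w, h1, h2⟩ | ⟨w, h1, h2⟩ | ⟨a, b, _, h1, h2⟩) <;>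
      simp_all only [Sum.inl.injEq, Sum.inr.injEq, Prod.mk.injEq, reduceCtorEq,
        Bool.false_eq_true, Bool.true_eq_false, and_false, false_and, and_true, true_and]
  have zV1ToInr : ∀ (v : V) (b : Bool), f (Sum.inl (v, false)) (Sum.inr b) = 0 := by
    intro v b; apply hsupp
    rintro (⟨w, h1, h2⟩ | ⟨w, h1, h2⟩ | ⟨a, c, _, h1, h2⟩) <;>
      simp_all only [Sum.inl.injEq, Sum.inr.injEq, Prod.mk.injEq, reduceCtorEq,
        Bool.false_eq_true, Bool.true_eq_false, and_false, false_and, and_true, true_and]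
  have zV2ToInl : ∀ (v : V) (x : V × Bool), f (Sum.inl (v, true)) (Sum.inl x) = 0 := by
    intro v x; apply hsupp
    rintro (⟨w, h1, h2⟩ | ⟨w, h1, h2⟩ | ⟨a, c, _, h1, h2⟩) <;>
      simp_all only [Sum.inl.injEq, Sum.inr.injEq, Prod.mk.injEq, reduceCtorEq,
        Bool.false_eq_true, Bool.true_eq_false, and_false, false_and, and_true, true_and]
  have zSToV2 : ∀ (v : V), f (Sum.inr false) (Sum.inl (v, true)) = 0 := by
    intro v; apply hsupp
    rintro (⟨w, h1, h2⟩ | ⟨w, h1, h2⟩ | ⟨a, c, _, h1, h2⟩) <;>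
      simp_all only [Sum.inl.injEq, Sum.inr.injEq, Prod.mk.injEq, reduceCtorEq,
        Bool.false_eq_true, Bool.true_eq_false, and_false, false_and, and_true, true_and]
  have zSToInr : ∀ (b : Bool), f (Sum.inr false) (Sum.inr b) = 0 := by
    intro b; apply hsupp
    rintro (⟨w, h1, h2⟩ | ⟨w, h1, h2⟩ | ⟨a, c, _, h1, h2⟩) <;>
      simp_all only [Sum.inl.injEq, Sum.inr.injEq, Prod.mk.injEq, reduceCtorEq,
        Bool.false_eq_true, Bool.true_eq_false, and_false, false_and, and_true, true_and]
  have zNonAdj : ∀ u v : V, ¬ G.Adj u v → f (Sum.inl (u, false)) (Sum.inl (v, true)) = 0 := by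
    intro u v h; apply hsupp
    rintro (⟨w, h1, h2⟩ | ⟨w, h1, h2⟩ | ⟨a, c, hadj, h1, h2⟩)
    · exact absurd h1 (by simp)
    · exact absurd h1 (by simp)
    · have ha : u = a := by simpa using h1
      have hc : v = c := by simpa using h2
      subst ha; subst hc; exact h hadj
  -- sum computations
  have inA : ∀ v : V, ∑ b, f b (Sum.inl (v, false)) = f (Sum.inr false) (Sum.inl (v, false)) := by
    intro v
    rw [Fintype.sum_sum_type]
    simp [zInlToV1, Fintype.sum_bool, zFromT]
  have outB : ∀ v : V, ∑ b, f (Sum.inl (v, false)) b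
      = ∑ u, f (Sum.inl (v, false)) (Sum.inl (u, true)) := by
    intro v
    rw [Fintype.sum_sum_type]
    simp [Fintype.sum_prod_type, Fintype.sum_bool, zV1ToInr, zInlToV1]
  have inC : ∀ v : V, ∑ b, f b (Sum.inl (v, true))
      = ∑ u, f (Sum.inl (u, false)) (Sum.inl (v, true)) := by
    intro v
    rw [Fintype.sum_sum_type]
    simp [Fintype.sum_prod_type, Fintype.sum_bool, zV2ToInl, zSToV2, zFromT]
  have outD : ∀ v : V, ∑ b, f (Sum.inl (v, true)) b = f (Sum.inl (v, true)) (Sum.inr true) := by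
    intro v
    rw [Fintype.sum_sum_type]
    simp [zV2ToInl, Fintype.sum_bool, zToS]
  have consV1 : ∀ v : V, ∑ u, f (Sum.inl (v, false)) (Sum.inl (u, true))
      = f (Sum.inr false) (Sum.inl (v, false)) := by
    intro v
    rw [← outB, ← hcons (Sum.inl (v, false)) (by simp) (by simp), inA]
  have consV2 : ∀ v : V, ∑ u, f (Sum.inl (u, false)) (Sum.inl (v, true))
      = f (Sum.inl (v, true)) (Sum.inr true) := by
    intro v
    rw [← inC, hcons (Sum.inl (v, true)) (by simp) (by simp), outD]
  have key : ∀ v : V, ∑ u, betaOfFlow f v u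
      = ((∑ u, f (Sum.inl (v, false)) (Sum.inl (u, true)))
        + ∑ u, f (Sum.inl (u, false)) (Sum.inl (v, true))) / 2 := by
    intro v
    unfold betaOfFlow
    rw [← Finset.sum_add_distrib, ← Finset.sum_div]
  refine ⟨?_, ?_, ?_, ?_, ?_, ?_⟩
  · intro u v; unfold betaOfFlow; ring
  · intro u v h
    have h' : ¬ G.Adj v u := fun hh => h hh.symm
    unfold betaOfFlow
    rw [zNonAdj u v h, zNonAdj v u h']; norm_num
  · intro u v
    unfold betaOfFlow
    constructor
    · have := hnonneg (Sum.inl (u, false)) (Sum.inl (v, true))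
      have := hnonneg (Sum.inl (v, false)) (Sum.inl (u, true))
      linarith
    · have := hcap (Sum.inl (u, false)) (Sum.inl (v, true))
      have := hcap (Sum.inl (v, false)) (Sum.inl (u, true))
      linarith
  · intro v
    rw [key v, consV1, consV2]
    have h1 := hcap (Sum.inr false) (Sum.inl (v, false))
    have h2 := hcap (Sum.inl (v, true)) (Sum.inr true)
    linarith
  · have hrhs : ∑ b, f (Sum.inr false) b
        = ∑ u, f (Sum.inr false) (Sum.inl (u, false)) := by
      rw [Fintype.sum_sum_type]
      simp [Fintype.sum_prod_type, Fintype.sum_bool, zSToV2, zSToInr]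
    have hswap : ∑ u, ∑ v, f (Sum.inl (u, false)) (Sum.inl (v, true))
        = ∑ u, ∑ v, f (Sum.inl (v, false)) (Sum.inl (u, true)) := Finset.sum_comm
    calc ∑ u, ∑ v, betaOfFlow f u v
        = ∑ u, ((∑ v, f (Sum.inl (u, false)) (Sum.inl (v, true)))
          + ∑ v, f (Sum.inl (v, false)) (Sum.inl (u, true))) / 2 :=
          Finset.sum_congr rfl fun u _ => key u
      _ = ((∑ u, ∑ v, f (Sum.inl (u, false)) (Sum.inl (v, true)))
          + ∑ u, ∑ v, f (Sum.inl (v, false)) (Sum.inl (u, true))) / 2 := by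
          rw [← Finset.sum_div, Finset.sum_add_distrib]
      _ = ∑ u, ∑ v, f (Sum.inl (u, false)) (Sum.inl (v, true)) := by rw [hswap]; ring
      _ = ∑ u, f (Sum.inr false) (Sum.inl (u, false)) :=
          Finset.sum_congr rfl fun u _ => consV1 u
      _ = ∑ b, f (Sum.inr false) b := hrhs.symm
  · intro h u v
    unfold betaOfFlow
    rcases h (Sum.inl (u, false)) (Sum.inl (v, true)) with h1 | h1 <;>
      rcases h (Sum.inl (v, false)) (Sum.inl (u, true)) with h2 | h2
    · exact ⟨0, by rw [h1, h2]; norm_num⟩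
    · exact ⟨1, by rw [h1, h2]; norm_num⟩
    · exact ⟨1, by rw [h1, h2]; norm_num⟩
    · exact ⟨2, by rw [h1, h2]; norm_num⟩
end

section
/- Let G = (V,E) be an undirected graph such that the all-1/2 assignment (x_v = 1/2 for all v) is the unique optimal fractional solution of the vertex cover LP of G, and let u ∈ V be a vertex contained in some minimum (integral) vertex cover of G. Then the minimum integral vertex cover size of G − u is one less than that of G, while the optimal fractional vertex cover LP value of G − u is exactly 1/2 less than that of G. Hence the integrality excess (integral optimum minus fractional optimum) of G − u equals that of G minus 1/2. -/
/-!
Removing `u` lowers the integral optimum by exactly one: a minimum cover containing `u` loses `u`,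
and adding `u` to any cover of `G - u` covers `G`.

For the LP, `1/2` off `u` and `0` at `u` is feasible for `G - u`, with value `|V|/2 - 1/2`.
Conversely, a fractional cover `y` of `G - u` becomes a fractional cover `w` of `G` once `y u := 1`.
For each `t ∈ [0, 1/2)`, rounding `w` to `0` where `w ≤ t`, to `1` where `w ≥ 1 - t` and to `1/2`
elsewhere keeps it a fractional cover of `G`, and the result is not the all-`1/2` point since it is
`1` at `u`. By uniqueness its value, a half-integer, is at least `|V|/2 + 1/2`. Averaging the
rounding over `t` gives back `w` (layer cake), so `∑ w ≥ |V|/2 + 1/2` and `∑ y ≥ |V|/2 - 1/2`.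
-/

open Finset

/-- `G` with the vertex `u` removed (kept as an isolated vertex, which affects
neither vertex covers nor optimal LP values beyond the harmless variable `x_u`). -/
def delVert {V : Type} (G : SimpleGraph V) (u : V) : SimpleGraph V where
  Adj a b := G.Adj a b ∧ a ≠ u ∧ b ≠ u
  symm := by
    constructor; rintro a b ⟨h, ha, hb⟩; exact ⟨h.symm, hb, ha⟩
  loopless := by
    constructor; rintro a ⟨h, _, _⟩; exact G.irrefl h

/-- A discrete layer-cake bound: `∑ c i * (b - a i) = ∫₀ᵇ ∑_{a i ≤ t} c i dt`. -/
theorem Finset.mul_le_sum_mul_sub_of_forall_le_sum_filter {ι α : Type*}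
    [CommRing α] [LinearOrder α] [IsStrictOrderedRing α]
    (s : Finset ι) (c a : ι → α) {m b : α} (hb : 0 ≤ b) (ha : ∀ i ∈ s, 0 ≤ a i ∧ a i ≤ b)
    (h : ∀ t, 0 ≤ t → t < b → m ≤ ∑ i ∈ s with a i ≤ t, c i) :
    m * b ≤ ∑ i ∈ s, c i * (b - a i) := by
  classical
  induction s using Finset.induction_on_max_value a generalizing b with
  | empty =>
    rcases hb.eq_or_lt with rfl | hb
    · simp
    · simpa using mul_nonpos_of_nonpos_of_nonneg (by simpa using h 0 le_rfl hb) hb.le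
  | insert w s hw hmax ih =>
    obtain ⟨hw0, hwb⟩ := ha w (mem_insert_self w s)
    have hrest : m * a w ≤ ∑ i ∈ s, c i * (a w - a i) := by
      refine ih hw0 (fun i hi => ⟨(ha i (mem_insert_of_mem hi)).1, hmax i hi⟩) fun t ht htw => ?_
      simpa [filter_insert, htw.not_ge] using h t ht (htw.trans_le hwb)
    have htotal : (b - a w) * m ≤ (b - a w) * ∑ i ∈ insert w s, c i := by
      rcases hwb.eq_or_lt with hwb | hwb
      · simp [hwb]
      · refine mul_le_mul_of_nonneg_left ?_ (sub_nonneg.2 hwb.le)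
        have hall : ∀ i ∈ insert w s, a i ≤ a w := fun i hi => by
          rcases mem_insert.1 hi with rfl | hi
          exacts [le_rfl, hmax i hi]
        simpa [filter_true_of_mem hall] using h (a w) hw0 hwb
    calc m * b = m * a w + (b - a w) * m := by ring
      _ ≤ ∑ i ∈ s, c i * (a w - a i) + (b - a w) * ∑ i ∈ insert w s, c i := add_le_add hrest htotal
      _ = ∑ i ∈ insert w s, c i * (b - a i) := by
        rw [sum_insert hw, sum_insert hw, mul_add, mul_sum, add_left_comm, ← sum_add_distrib]
        exact congrArg₂ (· + ·) (by ring) (sum_congr rfl fun i _ => by ring)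

variable {V : Type}

/-- Rounds `x v` to `0` if `x v ≤ t`, to `1` if `1 - t ≤ x v`, and to `1/2` otherwise (for
`t < 1/2`), written through the distance `1/2 - |x v - 1/2|` from `x v` to `{0, 1}` to match the
layer-cake bound. -/
def thresholdRound (x : V → ℚ) (t : ℚ) (v : V) : ℚ :=
  if 1 / 2 - |x v - 1 / 2| ≤ t then 1 / 2 + (SignType.sign (x v - 1 / 2) : ℚ) / 2 else 1 / 2

section thresholdRound

variable {x : V → ℚ} {t : ℚ} {v : V}

theorem thresholdRound_of_lt (h : x v < 1 / 2) :
    thresholdRound x t v = if x v ≤ t then 0 else 1 / 2 := by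
  have hneg : x v - 1 / 2 < 0 := by linarith
  simp only [thresholdRound, abs_of_neg hneg, sign_neg hneg]
  norm_num

theorem thresholdRound_of_gt (h : 1 / 2 < x v) :
    thresholdRound x t v = if 1 - x v ≤ t then 1 else 1 / 2 := by
  have hpos : 0 < x v - 1 / 2 := by linarith
  have hdist : 1 / 2 - (x v - 1 / 2) = 1 - x v := by ring
  simp only [thresholdRound, abs_of_pos hpos, sign_pos hpos, hdist]
  norm_num

theorem thresholdRound_of_eq (h : x v = 1 / 2) : thresholdRound x t v = 1 / 2 := by
  simp [thresholdRound, h]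

end thresholdRound

section Sum

variable [Fintype V]

theorem sum_thresholdRound (x : V → ℚ) (t : ℚ) :
    ∑ v, thresholdRound x t v = Fintype.card V / 2 +
      (∑ v with 1 / 2 - |x v - 1 / 2| ≤ t, (SignType.sign (x v - 1 / 2) : ℚ)) / 2 := by
  have hsplit : ∀ v, thresholdRound x t v = 1 / 2 +
      if 1 / 2 - |x v - 1 / 2| ≤ t then (SignType.sign (x v - 1 / 2) : ℚ) / 2 else 0 := by
    intro v
    unfold thresholdRound
    split_ifs <;> ring
  rw [sum_congr rfl fun v _ => hsplit v, sum_add_distrib, ← sum_filter, sum_div]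
  simp [div_eq_mul_inv]

theorem half_add_half_le_sum_of_forall_lt_sum_thresholdRound {x : V → ℚ}
    (hx : ∀ v, 0 ≤ x v ∧ x v ≤ 1)
    (h : ∀ t, 0 ≤ t → t < 1 / 2 → (Fintype.card V : ℚ) / 2 < ∑ v, thresholdRound x t v) :
    (Fintype.card V : ℚ) / 2 + 1 / 2 ≤ ∑ v, x v := by
  have hlayer : ∀ t, 0 ≤ t → t < 1 / 2 →
      1 ≤ ∑ v with 1 / 2 - |x v - 1 / 2| ≤ t, (SignType.sign (x v - 1 / 2) : ℚ) := by
    intro t ht0 ht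
    have hpos := h t ht0 ht
    rw [sum_thresholdRound] at hpos
    have hint : ((∑ v with 1 / 2 - |x v - 1 / 2| ≤ t, (SignType.sign (x v - 1 / 2) : ℤ) : ℤ) : ℚ) =
        ∑ v with 1 / 2 - |x v - 1 / 2| ≤ t, (SignType.sign (x v - 1 / 2) : ℚ) := by
      push_cast [SignType.intCast_cast]
      rfl
    rw [← hint] at hpos ⊢
    exact_mod_cast (Int.cast_pos (R := ℚ)).1 (by linarith)
  have hbound := univ.mul_le_sum_mul_sub_of_forall_le_sum_filter
    (fun v => (SignType.sign (x v - 1 / 2) : ℚ)) (fun v => 1 / 2 - |x v - 1 / 2|)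
    (by norm_num) (fun v _ => ⟨by have := hx v; rw [sub_nonneg, abs_le]; constructor <;> linarith,
      by simp⟩) hlayer
  have hsum : ∑ v, (SignType.sign (x v - 1 / 2) : ℚ) * (1 / 2 - (1 / 2 - |x v - 1 / 2|)) =
      ∑ v, x v - Fintype.card V / 2 := by
    simp only [sub_sub_cancel, sign_mul_abs, sum_sub_distrib, sum_const, card_univ, nsmul_eq_mul]
    ring
  linarith

end Sum

namespace SimpleGraph

def IsFracVertexCover (G : SimpleGraph V) (x : V → ℚ) : Prop :=
  (∀ v, 0 ≤ x v ∧ x v ≤ 1) ∧ ∀ a b, G.Adj a b → 1 ≤ x a + x b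

theorem IsFracVertexCover.thresholdRound {G : SimpleGraph V} {x : V → ℚ}
    (hx : G.IsFracVertexCover x) (t : ℚ) : G.IsFracVertexCover (_root_.thresholdRound x t) := by
  refine ⟨fun v => ?_, fun a b hab => ?_⟩
  · rcases lt_trichotomy (x v) (1 / 2) with h | h | h <;>
    simp only [thresholdRound_of_lt, thresholdRound_of_gt, thresholdRound_of_eq, h] <;>
    (try split_ifs) <;> norm_num
  · have hsum := hx.2 a b hab
    rcases lt_trichotomy (x a) (1 / 2) with ha | ha | ha <;>
    rcases lt_trichotomy (x b) (1 / 2) with hb | hb | hb <;>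
    simp only [thresholdRound_of_lt, thresholdRound_of_gt, thresholdRound_of_eq, ha, hb] <;>
    (try split_ifs) <;> linarith

variable [DecidableEq V] {G : SimpleGraph V} {u : V}

theorem IsVertexCover.erase_delVert {C : Finset V} (hC : G.IsVertexCover C) (u : V) :
    (delVert G u).IsVertexCover ↑(C.erase u) := by
  rintro a b ⟨hab, ha, hb⟩
  simpa [ha, hb] using hC hab

theorem IsVertexCover.insert_of_delVert {C : Finset V} (hC : (delVert G u).IsVertexCover C) :
    G.IsVertexCover ↑(insert u C) := by
  intro a b hab
  by_cases ha : a = u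
  · simp [ha]
  by_cases hb : b = u
  · simp [hb]
  simpa using (hC ⟨hab, ha, hb⟩).imp (mem_insert_of_mem ·) (mem_insert_of_mem ·)

theorem isLeast_card_vertexCover_delVert {C : Finset V} (hC : G.IsVertexCover C)
    (hmin : ∀ D : Finset V, G.IsVertexCover D → C.card ≤ D.card) (hu : u ∈ C) :
    IsLeast {n | ∃ D : Finset V, (delVert G u).IsVertexCover D ∧ D.card = n} (C.card - 1) := by
  refine ⟨⟨C.erase u, hC.erase_delVert u, card_erase_of_mem hu⟩, ?_⟩
  rintro _ ⟨D, hD, rfl⟩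
  have := hmin _ hD.insert_of_delVert
  have := card_insert_le u D
  omega

theorem sInf_card_vertexCover_delVert_add_one {C : Finset V} (hC : G.IsVertexCover C)
    (hmin : ∀ D : Finset V, G.IsVertexCover D → C.card ≤ D.card) (hu : u ∈ C) :
    sInf {n | ∃ D : Finset V, (delVert G u).IsVertexCover D ∧ D.card = n} + 1 =
      sInf {n | ∃ D : Finset V, G.IsVertexCover D ∧ D.card = n} := by
  have hG : IsLeast {n | ∃ D : Finset V, G.IsVertexCover D ∧ D.card = n} C.card :=
    ⟨⟨C, hC, rfl⟩, by rintro _ ⟨D, hD, rfl⟩; exact hmin D hD⟩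
  rw [(isLeast_card_vertexCover_delVert hC hmin hu).csInf_eq, hG.csInf_eq,
    Nat.sub_add_cancel (card_pos.2 ⟨u, hu⟩)]

theorem IsFracVertexCover.update_one_of_delVert {y : V → ℚ}
    (hy : (delVert G u).IsFracVertexCover y) : G.IsFracVertexCover (Function.update y u 1) := by
  refine ⟨fun v => ?_, fun a b hab => ?_⟩
  · rcases eq_or_ne v u with rfl | hv
    · simp
    · simpa [hv] using hy.1 v
  · rcases eq_or_ne a u with rfl | ha
    · simpa [hab.ne'] using (hy.1 b).1
    rcases eq_or_ne b u with rfl | hb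
    · simpa [ha] using (hy.1 a).1
    simpa [ha, hb] using hy.2 a b ⟨hab, ha, hb⟩

theorem half_sub_half_le_sum_of_isFracVertexCover_delVert [Fintype V]
    (huniq : ∀ x, G.IsFracVertexCover x → x ≠ (fun _ => 1 / 2) →
      (Fintype.card V : ℚ) / 2 < ∑ v, x v)
    {y : V → ℚ} (hy : (delVert G u).IsFracVertexCover y) :
    (Fintype.card V : ℚ) / 2 - 1 / 2 ≤ ∑ v, y v := by
  have hw := hy.update_one_of_delVert
  have hround : ∀ t, 0 ≤ t → t < 1 / 2 →
      (Fintype.card V : ℚ) / 2 < ∑ v, _root_.thresholdRound (Function.update y u 1) t v := by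
    intro t ht _
    refine huniq _ (hw.thresholdRound t) fun h => ?_
    have hu := congrFun h u
    rw [thresholdRound_of_gt (by norm_num)] at hu
    norm_num [ht] at hu
  have hw_sum := half_add_half_le_sum_of_forall_lt_sum_thresholdRound hw.1 hround
  have hy_sum := sum_update_of_mem (mem_univ u) y (y u)
  rw [sum_update_of_mem (mem_univ u)] at hw_sum
  rw [Function.update_eq_self] at hy_sum
  linarith [(hy.1 u).1]

end SimpleGraph

open SimpleGraph in
/-- If the all-1/2 assignment is the unique optimal fractional
solution of the vertex cover LP of `G` (so every other feasible solution has value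
strictly above `|V|/2`), and `u` lies in some minimum integral vertex cover, then
the minimum vertex cover size of `G - u` is one less than that of `G`, and the
optimal fractional vertex-cover-LP value of `G - u` is `|V|/2 - 1/2`. -/
theorem branching_reduces_integrality_excess {V : Type} [Fintype V] [DecidableEq V]
    (G : SimpleGraph V) (u : V)
    (huniq : ∀ x : V → ℚ,
      ((∀ v, 0 ≤ x v ∧ x v ≤ 1) ∧ ∀ a b, G.Adj a b → 1 ≤ x a + x b) →
      x ≠ (fun _ => 1/2) → (Fintype.card V : ℚ) / 2 < ∑ v, x v)
    (hmem : ∃ Cmin : Finset V,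
      (∀ a b, G.Adj a b → a ∈ Cmin ∨ b ∈ Cmin) ∧
      (∀ D : Finset V, (∀ a b, G.Adj a b → a ∈ D ∨ b ∈ D) → Cmin.card ≤ D.card) ∧
      u ∈ Cmin) :
    (sInf {n | ∃ C : Finset V,
        (∀ a b, (delVert G u).Adj a b → a ∈ C ∨ b ∈ C) ∧ C.card = n} + 1 =
      sInf {n | ∃ C : Finset V,
        (∀ a b, G.Adj a b → a ∈ C ∨ b ∈ C) ∧ C.card = n}) ∧
    (∃ x : V → ℚ,
      ((∀ v, 0 ≤ x v ∧ x v ≤ 1) ∧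
        ∀ a b, (delVert G u).Adj a b → 1 ≤ x a + x b) ∧
      (∀ y : V → ℚ,
        ((∀ v, 0 ≤ y v ∧ y v ≤ 1) ∧
          ∀ a b, (delVert G u).Adj a b → 1 ≤ y a + y b) →
        ∑ v, x v ≤ ∑ v, y v) ∧
      ∑ v, x v = (Fintype.card V : ℚ) / 2 - 1/2) := by
  obtain ⟨C, hC, hmin, hu⟩ := hmem
  refine ⟨sInf_card_vertexCover_delVert_add_one hC hmin hu, ?_⟩
  set x : V → ℚ := Function.update (fun _ => 1 / 2) u 0
  have hx_sum : ∑ v, x v = (Fintype.card V : ℚ) / 2 - 1 / 2 := by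
    have hhalf := sum_update_of_mem (mem_univ u) (fun _ => (1 / 2 : ℚ)) (1 / 2)
    rw [Function.update_eq_self, sum_const, card_univ, nsmul_eq_mul] at hhalf
    rw [sum_update_of_mem (mem_univ u)]
    linarith
  refine ⟨x, ⟨fun v => ?_, fun a b hab => ?_⟩, fun y hy => ?_, hx_sum⟩
  · rcases eq_or_ne v u with rfl | hv
    · norm_num [x]
    · norm_num [x, hv]
  · norm_num [x, hab.2.1, hab.2.2]
  · exact hx_sum.trans_le (half_sub_half_le_sum_of_isFracVertexCover_delVert huniq hy)
end

section
/- Let G = (V,E,T) be a finite undirected multigraph with a set T ⊆ V of tagged vertices. The edges of G can be oriented so that every untagged vertex has out-degree at least one if and only if every connected component of G either contains a tagged vertex or contains a cycle (equivalently, is not a tree consisting only of untagged vertices). -/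
/-- Connectivity (reachability) in a multigraph given by an edge-index type `E`
and an endpoint map `ends : E → V × V`. -/
def MGReach {V E : Type} (ends : E → V × V) : V → V → Prop :=
  Relation.ReflTransGen (fun a b => ∃ e, ends e = (a, b) ∨ ends e = (b, a))

/-!
An orientation in which no untagged vertex is a sink amounts to a choice of pairwise distinct
incident edges for the untagged vertices: orient each chosen edge away from the vertex that
chose it. In a component without tags every vertex then chooses an edge of the component, so
the component has at least as many edges as vertices.

Conversely, work in one component. If it contains a tagged vertex `t`, let every other vertex
choose the first edge of a shortest path to `t`; the distance to `t` drops strictly along a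
chosen edge, so no edge is chosen from both ends. Otherwise the component has at least as many
edges as vertices, whereas a breadth-first search tree uses one edge fewer than there are
vertices. An edge `e₀ = ab` off that tree is not a bridge, so `a` chooses `e₀` and every other
vertex chooses a shortest-path edge toward `a` in the component with `e₀` removed.
-/

open SimpleGraph Set

lemma SimpleGraph.Reachable.exists_adj_dist_lt {V : Type} {G : SimpleGraph V} {u r : V}
    (h : G.Reachable u r) (hne : u ≠ r) : ∃ w, G.Adj u w ∧ G.dist w r < G.dist u r := by
  obtain ⟨p, hp⟩ := h.exists_walk_length_eq_dist
  cases p with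
  | nil => exact absurd rfl hne
  | cons ha q => exact ⟨_, ha, (dist_le q).trans_lt (by simp [← hp])⟩

namespace Multigraph

variable {V E : Type}

def mgGraph (ends : E → V × V) (F : Set E) : SimpleGraph V :=
  fromEdgeSet ((fun e => s((ends e).1, (ends e).2)) '' F)

def tail (ends : E → V × V) (o : E → Bool) (e : E) : V :=
  if o e then (ends e).1 else (ends e).2

variable {ends : E → V × V}

lemma mgGraph_adj {F : Set E} {a b : V} :
    (mgGraph ends F).Adj a b ↔ (∃ e ∈ F, s((ends e).1, (ends e).2) = s(a, b)) ∧ a ≠ b := by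
  simp [mgGraph]

lemma mgGraph_reachable_of_mem {F : Set E} {e : E} (he : e ∈ F) {a b : V}
    (hab : s((ends e).1, (ends e).2) = s(a, b)) : (mgGraph ends F).Reachable a b := by
  rcases eq_or_ne a b with rfl | hne
  · rfl
  · exact (mgGraph_adj.2 ⟨⟨e, he, hab⟩, hne⟩).reachable

lemma reachable_fst_snd (e : E) : (mgGraph ends univ).Reachable (ends e).1 (ends e).2 :=
  mgGraph_reachable_of_mem (mem_univ e) rfl

lemma reachable_of_mem_ends {e : E} {u u' : V} (hu : u = (ends e).1 ∨ u = (ends e).2)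
    (hu' : u' = (ends e).1 ∨ u' = (ends e).2) : (mgGraph ends univ).Reachable u u' := by
  rcases hu with rfl | rfl <;> rcases hu' with rfl | rfl
  · rfl
  · exact reachable_fst_snd e
  · exact (reachable_fst_snd e).symm
  · rfl

lemma mgReach_iff_reachable {v w : V} :
    MGReach ends v w ↔ (mgGraph ends univ).Reachable v w := by
  rw [reachable_iff_reflTransGen]
  constructor
  · refine Relation.reflTransGen_closed (fun a b ⟨e, he⟩ => ?_) _ _
    rw [← reachable_iff_reflTransGen]
    refine mgGraph_reachable_of_mem (mem_univ e) ?_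
    rcases he with he | he <;> simp [he]
  · refine Relation.ReflTransGen.mono (fun a b hab => ?_) _ _
    obtain ⟨⟨e, -, he⟩, -⟩ := mgGraph_adj.1 hab
    exact ⟨e, by simpa [Sym2.eq_iff, Prod.ext_iff, and_comm] using he⟩

variable (ends) in
structure IsEdgeSelection (S : Set V) (R : V → E → Prop) : Prop where
  exists_rel : ∀ u ∈ S, ∃ e, R u e
  mem_ends : ∀ {u e}, R u e → u = (ends e).1 ∨ u = (ends e).2
  eq_of_rel : ∀ {u u' e}, R u e → R u' e → u = u'

lemma IsEdgeSelection.mono {S S' : Set V} {R : V → E → Prop}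
    (hR : IsEdgeSelection ends S R) (h : S' ⊆ S) : IsEdgeSelection ends S' R :=
  ⟨fun u hu => hR.exists_rel u (h hu), hR.mem_ends, hR.eq_of_rel⟩

lemma IsEdgeSelection.exists_orientation {S : Set V} {R : V → E → Prop}
    (hR : IsEdgeSelection ends S R) : ∃ o : E → Bool, ∀ u ∈ S, ∃ e, tail ends o e = u := by
  classical
  refine ⟨fun e => decide (∃ u, R u e ∧ (ends e).1 = u), fun u hu => ?_⟩
  obtain ⟨e, he⟩ := hR.exists_rel u hu
  refine ⟨e, ?_⟩
  simp only [tail]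
  by_cases h1 : (ends e).1 = u
  · rw [if_pos (decide_eq_true ⟨u, he, h1⟩), h1]
  · have hnot : ¬∃ u', R u' e ∧ (ends e).1 = u' := by
      rintro ⟨u', hu', rfl⟩
      exact h1 (hR.eq_of_rel hu' he)
    rw [if_neg (by simpa using hnot)]
    exact ((hR.mem_ends he).resolve_left (Ne.symm h1)).symm

lemma exists_isEdgeSelection_of_forall_component {A : Set V}
    (h : ∀ v₀, ∃ R, IsEdgeSelection ends {u | (mgGraph ends univ).Reachable v₀ u ∧ u ∈ A} R) :
    ∃ R, IsEdgeSelection ends A R := by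
  have hc : ∀ c : (mgGraph ends univ).ConnectedComponent, ∃ R,
      IsEdgeSelection ends {u | (mgGraph ends univ).connectedComponentMk u = c ∧ u ∈ A} R := by
    refine ConnectedComponent.ind fun v₀ => ?_
    simpa only [ConnectedComponent.eq, reachable_comm] using h v₀
  choose R hR using hc
  refine ⟨fun u e => R ((mgGraph ends univ).connectedComponentMk u) u e,
    fun u hu => (hR _).exists_rel u ⟨rfl, hu⟩, fun he => (hR _).mem_ends he, ?_⟩
  intro u u' e he he'
  have hc : (mgGraph ends univ).connectedComponentMk u =
      (mgGraph ends univ).connectedComponentMk u' :=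
    ConnectedComponent.sound (reachable_of_mem_ends ((hR _).mem_ends he) ((hR _).mem_ends he'))
  rw [← hc] at he'
  exact (hR _).eq_of_rel he he'

variable (ends) in
def IsStepToward (F : Set E) (r u : V) (e : E) : Prop :=
  e ∈ F ∧ ∃ w, s((ends e).1, (ends e).2) = s(u, w) ∧
    (mgGraph ends F).dist w r < (mgGraph ends F).dist u r

section StepToward

variable {F : Set E} {r : V}

lemma isEdgeSelection_isStepToward :
    IsEdgeSelection ends {u | (mgGraph ends F).Reachable u r ∧ u ≠ r}
      (IsStepToward ends F r) where
  exists_rel u hu := by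
    obtain ⟨w, huw, hw⟩ := hu.1.exists_adj_dist_lt hu.2
    obtain ⟨⟨e, he, hends⟩, -⟩ := mgGraph_adj.1 huw
    exact ⟨e, he, w, hends, hw⟩
  mem_ends := by
    rintro u e ⟨-, w, hw, -⟩
    have : u ∈ s((ends e).1, (ends e).2) := hw ▸ Sym2.mem_mk_left u w
    exact Sym2.mem_iff.1 this
  eq_of_rel := by
    rintro u u' e ⟨-, w, hw, hlt⟩ ⟨-, w', hw', hlt'⟩
    by_contra hne
    rw [hw, Sym2.eq_iff] at hw'
    obtain ⟨rfl, rfl⟩ | ⟨rfl, rfl⟩ := hw'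
    · exact hne rfl
    · omega

lemma reachable_of_forall_isStepToward {F' : Set E}
    (hF' : ∀ u, (mgGraph ends F).Reachable u r → u ≠ r → ∃ e ∈ F', IsStepToward ends F r u e)
    {u : V} (hu : (mgGraph ends F).Reachable u r) : (mgGraph ends F').Reachable u r := by
  induction h : (mgGraph ends F).dist u r using Nat.strong_induction_on generalizing u with
  | _ n ih =>
  rcases eq_or_ne u r with rfl | hne
  · rfl
  obtain ⟨e, he', heF, w, hw, hlt⟩ := hF' u hu hne
  have hwr : (mgGraph ends F).Reachable w r :=
    (mgGraph_reachable_of_mem heF hw).symm.trans hu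
  exact (mgGraph_reachable_of_mem he' hw).trans (ih _ (h ▸ hlt) hwr rfl)

end StepToward

lemma exists_isEdgeSelection_of_reachable_compl {S : Set V} (e₀ : E)
    (hS : ∀ u ∈ S, (mgGraph ends {e₀}ᶜ).Reachable u (ends e₀).1) :
    ∃ R, IsEdgeSelection ends S R := by
  have hsel := isEdgeSelection_isStepToward (ends := ends) (F := {e₀}ᶜ) (r := (ends e₀).1)
  refine ⟨fun u e => (u = (ends e₀).1 ∧ e = e₀) ∨ IsStepToward ends {e₀}ᶜ (ends e₀).1 u e,
    ⟨fun u hu => ?_, ?_, ?_⟩⟩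
  · by_cases hu₀ : u = (ends e₀).1
    · exact ⟨e₀, Or.inl ⟨hu₀, rfl⟩⟩
    · obtain ⟨e, he⟩ := hsel.exists_rel u ⟨hS u hu, hu₀⟩
      exact ⟨e, Or.inr he⟩
  · rintro u e (⟨rfl, rfl⟩ | he)
    · exact Or.inl rfl
    · exact hsel.mem_ends he
  · rintro u u' e (⟨hu, he⟩ | he) (⟨hu', he'⟩ | he')
    · exact hu.trans hu'.symm
    · exact absurd he'.1 (by simp [he])
    · exact absurd he.1 (by simp [he'])
    · exact hsel.eq_of_rel he he'

/-- The conclusion says that `e₀` is not a bridge; it is found off a breadth-first search tree. -/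
lemma exists_reachable_compl_of_ncard_le [Finite V] {v₀ : V}
    (h : {u | (mgGraph ends univ).Reachable v₀ u}.ncard ≤
      {e | (mgGraph ends univ).Reachable v₀ (ends e).1}.ncard) :
    ∃ e₀, ∀ u, (mgGraph ends univ).Reachable v₀ u →
      (mgGraph ends {e₀}ᶜ).Reachable u (ends e₀).1 := by
  set S := {u | (mgGraph ends univ).Reachable v₀ u}
  set ES := {e | (mgGraph ends univ).Reachable v₀ (ends e).1}
  have hS : 0 < S.ncard := (ncard_pos (toFinite S)).2 ⟨v₀, Reachable.refl v₀⟩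
  obtain ⟨e₁, -⟩ := nonempty_of_ncard_ne_zero (hS.trans_le h).ne'
  have : Nonempty E := ⟨e₁⟩
  have hstep : ∀ u ∈ S \ {v₀}, ∃ e, IsStepToward ends univ v₀ u e :=
    fun u hu => isEdgeSelection_isStepToward.exists_rel u ⟨hu.1.symm, hu.2⟩
  choose! p hp using hstep
  have hinj : InjOn p (S \ {v₀}) := fun u hu u' hu' huu' =>
    isEdgeSelection_isStepToward.eq_of_rel (hp u hu) (huu' ▸ hp u' hu')
  obtain ⟨e₀, he₀, hnot⟩ : ∃ e₀ ∈ ES, e₀ ∉ p '' (S \ {v₀}) := by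
    refine exists_mem_notMem_of_ncard_lt_ncard ?_ ((toFinite _).image p)
    calc (p '' (S \ {v₀})).ncard = (S \ {v₀}).ncard := hinj.ncard_image
      _ < S.ncard := ncard_sdiff_singleton_lt_of_mem (Reachable.refl v₀)
      _ ≤ ES.ncard := h
  have hv₀ : ∀ u ∈ S, (mgGraph ends {e₀}ᶜ).Reachable u v₀ := fun u hu =>
    reachable_of_forall_isStepToward (fun u hu hne =>
      ⟨p u, mem_compl_singleton_iff.2 fun hpu => hnot ⟨u, ⟨hu.symm, hne⟩, hpu⟩,
        hp u ⟨hu.symm, hne⟩⟩) hu.symm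
  exact ⟨e₀, fun u hu => (hv₀ u hu).trans (hv₀ _ he₀).symm⟩

lemma exists_isEdgeSelection_component [Finite V] {T : Set V} {v₀ : V}
    (h : (∃ w, (mgGraph ends univ).Reachable v₀ w ∧ w ∈ T) ∨
      {u | (mgGraph ends univ).Reachable v₀ u}.ncard ≤
        {e | (mgGraph ends univ).Reachable v₀ (ends e).1}.ncard) :
    ∃ R, IsEdgeSelection ends {u | (mgGraph ends univ).Reachable v₀ u ∧ u ∈ Tᶜ} R := by
  rcases h with ⟨t, ht, htT⟩ | hcard
  · exact ⟨_, isEdgeSelection_isStepToward.mono fun u ⟨hu, huT⟩ =>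
      ⟨hu.symm.trans ht, fun hut => huT (hut ▸ htT)⟩⟩
  · obtain ⟨e₀, he₀⟩ := exists_reachable_compl_of_ncard_le hcard
    obtain ⟨R, hR⟩ := exists_isEdgeSelection_of_reachable_compl e₀
      (S := {u | (mgGraph ends univ).Reachable v₀ u}) he₀
    exact ⟨R, hR.mono fun u hu => hu.1⟩

lemma ncard_le_ncard_of_forall_exists_tail [Finite E] {o : E → Bool} {v₀ : V}
    (h : ∀ u, (mgGraph ends univ).Reachable v₀ u → ∃ e, tail ends o e = u) :
    {u | (mgGraph ends univ).Reachable v₀ u}.ncard ≤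
      {e | (mgGraph ends univ).Reachable v₀ (ends e).1}.ncard := by
  have hsub : {u | (mgGraph ends univ).Reachable v₀ u} ⊆
      tail ends o '' {e | (mgGraph ends univ).Reachable v₀ (ends e).1} := by
    intro u hu
    obtain ⟨e, rfl⟩ := h u hu
    refine ⟨e, ?_, rfl⟩
    unfold tail at hu
    split at hu
    · exact hu
    · exact hu.trans (reachable_fst_snd e).symm
  exact (ncard_le_ncard hsub ((toFinite _).image _)).trans (ncard_image_le (toFinite _))

end Multigraph

open Multigraph

theorem orientation_no_untagged_sink_general {V E : Type} [Fintype V] [Fintype E]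
    (ends : E → V × V)
    (T : Finset V) :
    (∃ o : E → Bool,
      ∀ v ∉ T, ∃ e, (if o e then (ends e).1 else (ends e).2) = v) ↔
    (∀ v : V,
      (∃ w, MGReach ends v w ∧ w ∈ T) ∨
      Set.ncard {w | MGReach ends v w} ≤
        Set.ncard {e : E | MGReach ends v (ends e).1}) := by
  simp only [mgReach_iff_reachable]
  constructor
  · rintro ⟨o, ho⟩ v
    exact or_iff_not_imp_left.2 fun hT => ncard_le_ncard_of_forall_exists_tail fun u hu =>
      ho u fun huT => hT ⟨u, hu, huT⟩
  · intro h
    obtain ⟨R, hR⟩ := exists_isEdgeSelection_of_forall_component (A := (T : Set V)ᶜ) fun v =>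
      exists_isEdgeSelection_component (h v)
    exact hR.exists_orientation

/-- A finite multigraph (loop-free; parallel edges allowed) with
tagged vertex set `T` admits an orientation in which every untagged vertex has
out-degree at least one iff every connected component contains a tagged vertex or a
cycle.  A connected component contains a cycle iff its number of edges is at least
its number of vertices (it is a tree iff #edges = #vertices − 1). -/
theorem orientation_no_untagged_sink {V E : Type} [Fintype V] [Fintype E]
    [DecidableEq V]
    (ends : E → V × V) (hloop : ∀ e, (ends e).1 ≠ (ends e).2)
    (T : Finset V) :
    (∃ o : E → Bool,
      ∀ v ∉ T, ∃ e, (if o e then (ends e).1 else (ends e).2) = v) ↔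
    (∀ v : V,
      (∃ w, MGReach ends v w ∧ w ∈ T) ∨
      Set.ncard {w | MGReach ends v w} ≤
        Set.ncard {e : E | MGReach ends v (ends e).1}) :=
  orientation_no_untagged_sink_general ends T
end

section
/- Let G = (V,E,T) be a finite undirected multigraph with tagged vertex set T ⊆ V. The edges of G can be 2-colored so that every untagged vertex is incident to edges of both colors if and only if (i) every untagged vertex has degree at least 2, and (ii) no connected component of G that contains no tagged vertex is a simple cycle of odd length. -/
/-!
Necessity: a vertex seeing both colors has two edges; and if every vertex of a 2-regular component
sees both colors, each of its vertices lies on exactly one `true` edge, whose two ends both lie in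
the component, so the component has even order.

Sufficiency, one component at a time. Among the trees of parent links rooted at a vertex, one of
maximal total depth spans the component and is normal, i.e. every edge joins a vertex to one of
its ancestors: otherwise one could attach a new vertex, or hang the subtree of the shallower end
of an edge between incomparable vertices below its other end. Color the edge from a vertex to its
parent by the parity of the parent's depth and every other edge by the parity of its deeper end.
Then a non-root vertex of degree at least 2 sees both colors: on its parent edge, and on an edge
to a child or else to a proper ancestor. So the root is taken tagged when the component has a
tagged vertex. Otherwise it is taken of degree at least 3 and repaired by flipping every edge that
meets the subtree of one child if it has two children, or else the cycle closed by a non-tree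
edge at the root. With no vertex of degree at least 3, the component is 2-regular, and the parity
count above shows that the root sees both colors when the order is even.
-/

namespace Multigraph

variable {V E : Type} (ends : E → V × V)

def Inc (e : E) (v : V) : Prop := (ends e).1 = v ∨ (ends e).2 = v

def Joins (e : E) (x y : V) : Prop := ends e = (x, y) ∨ ends e = (y, x)

noncomputable def degree (v : V) : ℕ := Set.ncard {e | Inc ends e v}

def BothColorsAt (c : E → Bool) (v : V) : Prop :=
  (∃ e, Inc ends e v ∧ c e = true) ∧ (∃ e, Inc ends e v ∧ c e = false)

noncomputable def flipOn (F : Set E) (c : E → Bool) (e : E) : Bool := by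
  classical exact if e ∈ F then !c e else c e

variable {ends} {e : E} {v w x y : V}

namespace Joins

lemma symm (h : Joins ends e x y) : Joins ends e y x := Or.symm h

lemma inc_left (h : Joins ends e x y) : Inc ends e x := by
  rcases h with h | h <;> simp [Inc, h]

lemma inc_right (h : Joins ends e x y) : Inc ends e y := h.symm.inc_left

lemma eq_or_eq_of_inc (h : Joins ends e x y) (hv : Inc ends e v) : v = x ∨ v = y := by
  rcases h with h | h <;> rcases hv with hv | hv <;> simp_all [eq_comm]

lemma ne (hloop : ∀ e, (ends e).1 ≠ (ends e).2) (h : Joins ends e x y) : x ≠ y := by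
  rcases h with h | h <;> simpa [h, eq_comm] using hloop e

lemma reach (h : Joins ends e x y) : MGReach ends x y := .single ⟨e, h⟩

end Joins

lemma Inc.exists_joins (h : Inc ends e v) : ∃ w, Joins ends e v w := by
  rcases h with h | h
  · exact ⟨(ends e).2, .inl (by rw [← h])⟩
  · exact ⟨(ends e).1, .inr (by rw [← h])⟩

lemma MGReach.symm {a b : V} (h : MGReach ends a b) : MGReach ends b a := by
  induction h with
  | refl => exact .refl
  | tail _ hbc ih =>
    obtain ⟨e, he⟩ := hbc
    exact .head ⟨e, he.symm⟩ ih

lemma MGReach.of_inc {r : V} (h : MGReach ends r v) (hv : Inc ends e v) (hw : Inc ends e w) :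
    MGReach ends r w := by
  obtain ⟨u, hu⟩ := hv.exists_joins
  rcases hu.eq_or_eq_of_inc hw with rfl | rfl
  exacts [h, h.trans hu.reach]

section Colorings

variable {c c' : E → Bool} {F : Set E}

lemma BothColorsAt.congr (h : ∀ e, Inc ends e v → c' e = c e) (hc : BothColorsAt ends c v) :
    BothColorsAt ends c' v := by
  obtain ⟨⟨a, ha, hca⟩, ⟨b, hb, hcb⟩⟩ := hc
  exact ⟨⟨a, ha, (h a ha).trans hca⟩, ⟨b, hb, (h b hb).trans hcb⟩⟩

lemma bothColorsAt_of_ne {a b : E} (ha : Inc ends a v) (hb : Inc ends b v) (hab : c a ≠ c b) :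
    BothColorsAt ends c v := by
  cases hca : c a <;> cases hcb : c b <;> simp_all
  exacts [⟨⟨b, hb, hcb⟩, ⟨a, ha, hca⟩⟩, ⟨⟨a, ha, hca⟩, ⟨b, hb, hcb⟩⟩]

lemma BothColorsAt.one_lt_degree [Finite E] (hc : BothColorsAt ends c v) :
    1 < degree ends v := by
  obtain ⟨⟨a, ha, hca⟩, ⟨b, hb, hcb⟩⟩ := hc
  exact (Set.one_lt_ncard_iff).2 ⟨a, b, ha, hb, by rintro rfl; simp_all⟩

lemma flipOn_of_mem (h : e ∈ F) : flipOn F c e = !c e := by simp [flipOn, h]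

lemma flipOn_of_notMem (h : e ∉ F) : flipOn F c e = c e := by simp [flipOn, h]

lemma BothColorsAt.flipOn_of_forall_mem (hF : ∀ e, Inc ends e v → e ∈ F)
    (hc : BothColorsAt ends c v) : BothColorsAt ends (flipOn F c) v := by
  obtain ⟨⟨a, ha, hca⟩, ⟨b, hb, hcb⟩⟩ := hc
  exact ⟨⟨b, hb, by simp [flipOn_of_mem (hF b hb), hcb]⟩,
    ⟨a, ha, by simp [flipOn_of_mem (hF a ha), hca]⟩⟩

lemma BothColorsAt.flipOn_of_forall_notMem (hF : ∀ e, Inc ends e v → e ∉ F)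
    (hc : BothColorsAt ends c v) : BothColorsAt ends (flipOn F c) v :=
  hc.congr fun e he => flipOn_of_notMem (hF e he)

end Colorings

/-- `par v` is the parent of `v ∈ S` and `pe v` the edge to it; the root is its own parent and
its `pe` is meaningless. -/
structure RootedTree (ends : E → V × V) (r : V) where
  S : Finset V
  par : V → V
  pe : V → E
  depth : V → ℕ
  root_mem : r ∈ S
  par_root : par r = r
  depth_root : depth r = 0
  par_mem : ∀ v ∈ S, par v ∈ S
  joins_pe : ∀ v ∈ S, v ≠ r → Joins ends (pe v) v (par v)
  depth_eq : ∀ v ∈ S, v ≠ r → depth v = depth (par v) + 1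

namespace RootedTree

variable {r : V} (T : RootedTree ends r)

def IsAncestor (x y : V) : Prop := ∃ k, T.par^[k] y = x

def weight : ℕ := ∑ v ∈ T.S, (T.depth v + 1)

def IsSpanning : Prop := ∀ v, MGReach ends r v → v ∈ T.S

def IsNormal : Prop :=
  ∀ x ∈ T.S, ∀ e y, Joins ends e x y → T.IsAncestor x y ∨ T.IsAncestor y x

def IsTreeEdge (e : E) : Prop := ∃ v ∈ T.S, v ≠ r ∧ T.pe v = e

noncomputable def color (e : E) : Bool := by
  classical exact
    if T.IsTreeEdge e then !(max (T.depth (ends e).1) (T.depth (ends e).2)).bodd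
    else (max (T.depth (ends e).1) (T.depth (ends e).2)).bodd

variable {T}

lemma iterate_mem (hv : v ∈ T.S) (k : ℕ) : T.par^[k] v ∈ T.S := by
  induction k with
  | zero => exact hv
  | succ k ih => rw [Function.iterate_succ_apply']; exact T.par_mem _ ih

lemma eq_root_of_depth_eq_zero (hv : v ∈ T.S) (h : T.depth v = 0) : v = r := by
  by_contra hvr
  have := T.depth_eq v hv hvr
  omega

lemma depth_iterate (hv : v ∈ T.S) (k : ℕ) : T.depth (T.par^[k] v) = T.depth v - k := by
  induction k with
  | zero => rfl
  | succ k ih =>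
    rw [Function.iterate_succ_apply']
    by_cases hr : T.par^[k] v = r
    · rw [hr, T.par_root, T.depth_root]
      rw [hr, T.depth_root] at ih
      omega
    · have := T.depth_eq _ (iterate_mem hv k) hr
      omega

lemma depth_lt_card [Fintype V] (hv : v ∈ T.S) : T.depth v < Fintype.card V := by
  classical
  have hinj : Set.InjOn (fun k => T.par^[k] v) (Finset.range (T.depth v + 1)) := by
    intro i hi j hj hij
    have := congrArg T.depth hij
    simp only [depth_iterate hv] at this
    simp only [Finset.coe_range, Set.mem_Iio] at hi hj
    omega
  have := Finset.card_le_univ ((Finset.range (T.depth v + 1)).image fun k => T.par^[k] v)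
  rw [Finset.card_image_of_injOn hinj, Finset.card_range] at this
  omega

lemma weight_le [Fintype V] : T.weight ≤ Fintype.card V * Fintype.card V :=
  calc T.weight ≤ ∑ _v ∈ T.S, Fintype.card V :=
        Finset.sum_le_sum fun v hv => depth_lt_card hv
    _ ≤ Fintype.card V * Fintype.card V := by
        rw [Finset.sum_const, smul_eq_mul]
        exact Nat.mul_le_mul_right _ (Finset.card_le_univ _)

lemma isAncestor_refl (x : V) : T.IsAncestor x x := ⟨0, rfl⟩

lemma IsAncestor.of_par (h : T.IsAncestor x (T.par y)) : T.IsAncestor x y := by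
  obtain ⟨k, hk⟩ := h
  exact ⟨k + 1, by rwa [Function.iterate_succ_apply]⟩

lemma IsAncestor.par_of_ne (h : T.IsAncestor x y) (hne : x ≠ y) : T.IsAncestor x (T.par y) := by
  obtain ⟨_ | k, hk⟩ := h
  · exact absurd hk.symm hne
  · exact ⟨k, by rwa [← Function.iterate_succ_apply]⟩

lemma IsAncestor.par (h : T.IsAncestor x y) : T.IsAncestor (T.par x) y := by
  obtain ⟨k, rfl⟩ := h
  exact ⟨k + 1, Function.iterate_succ_apply' _ _ _⟩

lemma IsAncestor.trans (hxy : T.IsAncestor x y) (hyw : T.IsAncestor y w) : T.IsAncestor x w := by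
  obtain ⟨k, rfl⟩ := hxy
  obtain ⟨j, rfl⟩ := hyw
  exact ⟨k + j, Function.iterate_add_apply _ _ _ _⟩

lemma IsAncestor.total (hx : T.IsAncestor x v) (hy : T.IsAncestor y v) :
    T.IsAncestor x y ∨ T.IsAncestor y x := by
  obtain ⟨k, rfl⟩ := hx
  obtain ⟨j, rfl⟩ := hy
  rcases le_total j k with h | h
  · exact .inl ⟨k - j, by rw [← Function.iterate_add_apply, Nat.sub_add_cancel h]⟩
  · exact .inr ⟨j - k, by rw [← Function.iterate_add_apply, Nat.sub_add_cancel h]⟩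

lemma IsAncestor.mem (hy : y ∈ T.S) (h : T.IsAncestor x y) : x ∈ T.S := by
  obtain ⟨k, rfl⟩ := h
  exact iterate_mem hy k

lemma eq_root_of_isAncestor_root (h : T.IsAncestor x r) : x = r := by
  obtain ⟨k, rfl⟩ := h
  exact Function.iterate_fixed T.par_root k

lemma isAncestor_root (hv : v ∈ T.S) : T.IsAncestor r v :=
  ⟨T.depth v, eq_root_of_depth_eq_zero (iterate_mem hv _) (by rw [depth_iterate hv, Nat.sub_self])⟩

lemma IsAncestor.depth_le (hy : y ∈ T.S) (h : T.IsAncestor x y) : T.depth x ≤ T.depth y := by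
  obtain ⟨k, rfl⟩ := h
  rw [depth_iterate hy]
  exact Nat.sub_le _ _

lemma IsAncestor.exists_child (hy : y ∈ T.S) (h : T.IsAncestor x y) (hne : x ≠ y) :
    ∃ u ∈ T.S, u ≠ r ∧ T.par u = x ∧ T.IsAncestor u y := by
  obtain ⟨k, hk⟩ := h
  induction k generalizing y with
  | zero => exact absurd hk.symm hne
  | succ k ih =>
    rw [Function.iterate_succ_apply] at hk
    have hyr : y ≠ r := by
      rintro rfl
      rw [T.par_root, Function.iterate_fixed T.par_root] at hk
      exact hne hk.symm
    by_cases hpx : T.par y = x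
    · exact ⟨y, hy, hyr, hpx, isAncestor_refl y⟩
    · obtain ⟨u, hu, hur, hpu, hanc⟩ := ih (T.par_mem y hy) (Ne.symm hpx) hk
      exact ⟨u, hu, hur, hpu, hanc.of_par⟩

lemma IsAncestor.depth_lt (hy : y ∈ T.S) (h : T.IsAncestor x y) (hne : x ≠ y) :
    T.depth x < T.depth y := by
  obtain ⟨u, hu, hur, rfl, hanc⟩ := h.exists_child hy hne
  have := T.depth_eq u hu hur
  have := hanc.depth_le hy
  omega

lemma IsAncestor.reach (hy : y ∈ T.S) (h : T.IsAncestor x y) : MGReach ends x y := by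
  obtain ⟨k, rfl⟩ := h
  induction k generalizing y with
  | zero => exact .refl
  | succ k ih =>
    rw [Function.iterate_succ_apply]
    by_cases hyr : y = r
    · subst hyr
      rw [T.par_root]
      exact ih hy
    · exact (ih (T.par_mem y hy)).trans (T.joins_pe y hy hyr).symm.reach

lemma reach_of_mem (hv : v ∈ T.S) : MGReach ends r v := (isAncestor_root hv).reach hv

lemma mem_of_joins (hsp : T.IsSpanning) (hx : x ∈ T.S) (he : Joins ends e x y) : y ∈ T.S :=
  hsp y ((reach_of_mem hx).trans he.reach)

lemma exists_weight_lt_of_joins_notMem (hv : v ∈ T.S) (he : Joins ends e v w) (hw : w ∉ T.S) :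
    ∃ T' : RootedTree ends r, T.weight < T'.weight := by
  classical
  have hne : ∀ u ∈ T.S, u ≠ w := fun u hu h => hw (h ▸ hu)
  have hwr : w ≠ r := (hne r T.root_mem).symm
  refine ⟨{ S := insert w T.S
            par := Function.update T.par w v
            pe := Function.update T.pe w e
            depth := Function.update T.depth w (T.depth v + 1)
            root_mem := Finset.mem_insert_of_mem T.root_mem
            par_root := by rw [Function.update_of_ne hwr.symm, T.par_root]
            depth_root := by rw [Function.update_of_ne hwr.symm, T.depth_root]
            par_mem := ?_, joins_pe := ?_, depth_eq := ?_ }, ?_⟩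
  · intro u hu
    rcases Finset.mem_insert.1 hu with rfl | hu
    · simpa using Finset.mem_insert_of_mem hv
    · simpa [Function.update_of_ne (hne u hu)] using Finset.mem_insert_of_mem (T.par_mem u hu)
  · intro u hu hur
    rcases Finset.mem_insert.1 hu with rfl | hu
    · simpa using he.symm
    · simpa [Function.update_of_ne (hne u hu)] using T.joins_pe u hu hur
  · intro u hu hur
    rcases Finset.mem_insert.1 hu with rfl | hu
    · simp [Function.update_of_ne (hne v hv)]
    · simp [Function.update_of_ne (hne u hu), Function.update_of_ne (hne _ (T.par_mem u hu)),
        T.depth_eq u hu hur]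
  · have hsum : ∑ u ∈ T.S, (Function.update T.depth w (T.depth v + 1) u + 1) = T.weight :=
      Finset.sum_congr rfl fun u hu => by rw [Function.update_of_ne (hne u hu)]
    simp only [weight] at hsum ⊢
    rw [Finset.sum_insert hw, hsum]
    omega

/-- Hang the subtree of `x` below `y`. -/
lemma exists_weight_lt_of_not_isAncestor_of_depth_le (hx : x ∈ T.S) (hy : y ∈ T.S)
    (he : Joins ends e x y) (hxy : ¬T.IsAncestor x y) (hd : T.depth x ≤ T.depth y) :
    ∃ T' : RootedTree ends r, T.weight < T'.weight := by
  classical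
  have hxr : x ≠ r := fun h => hxy (h ▸ isAncestor_root hy)
  have hrx : ¬T.IsAncestor x r := fun h => hxr (eq_root_of_isAncestor_root h)
  have hanc : ∀ u, u ≠ x → (T.IsAncestor x (T.par u) ↔ T.IsAncestor x u) :=
    fun u hu => ⟨IsAncestor.of_par, fun h => h.par_of_ne (Ne.symm hu)⟩
  let δ := T.depth y + 1 - T.depth x
  refine ⟨{ S := T.S
            par := Function.update T.par x y
            pe := Function.update T.pe x e
            depth := fun u => if T.IsAncestor x u then T.depth u + δ else T.depth u
            root_mem := T.root_mem
            par_root := by rw [Function.update_of_ne hxr.symm, T.par_root]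
            depth_root := by simp [hrx, T.depth_root]
            par_mem := ?_, joins_pe := ?_, depth_eq := ?_ }, ?_⟩
  · intro u hu
    by_cases hux : u = x
    · simpa [hux] using hy
    · simpa [hux] using T.par_mem u hu
  · intro u hu hur
    by_cases hux : u = x
    · subst hux
      simpa using he
    · simpa [hux] using T.joins_pe u hu hur
  · intro u hu hur
    by_cases hux : u = x
    · subst hux
      simp [isAncestor_refl, hxy, δ]
      omega
    · simp only [Function.update_of_ne hux, hanc u hux, T.depth_eq u hu hur]
      split_ifs <;> omega
  · refine Finset.sum_lt_sum (fun u _ => ?_) ⟨x, hx, ?_⟩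
    · dsimp only
      split_ifs <;> omega
    · simp [isAncestor_refl, δ]
      omega

lemma exists_weight_lt_of_not_isAncestor (hx : x ∈ T.S) (hy : y ∈ T.S) (he : Joins ends e x y)
    (hxy : ¬T.IsAncestor x y) (hyx : ¬T.IsAncestor y x) :
    ∃ T' : RootedTree ends r, T.weight < T'.weight := by
  rcases le_total (T.depth x) (T.depth y) with hd | hd
  · exact exists_weight_lt_of_not_isAncestor_of_depth_le hx hy he hxy hd
  · exact exists_weight_lt_of_not_isAncestor_of_depth_le hy hx he.symm hyx hd

variable (ends) in
lemma exists_isSpanning_isNormal [Fintype V] [Nonempty E] (r : V) :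
    ∃ T : RootedTree ends r, T.IsSpanning ∧ T.IsNormal := by
  let T₀ : RootedTree ends r :=
    { S := {r}, par := id, pe := fun _ => Classical.arbitrary E, depth := fun _ => 0
      root_mem := Finset.mem_singleton_self r, par_root := rfl, depth_root := rfl
      par_mem := fun v hv => hv
      joins_pe := fun v hv hvr => absurd (Finset.mem_singleton.1 hv) hvr
      depth_eq := fun v hv hvr => absurd (Finset.mem_singleton.1 hv) hvr }
  have hbdd : BddAbove (Set.range (weight : RootedTree ends r → ℕ)) :=
    ⟨_, Set.forall_mem_range.2 fun T => T.weight_le⟩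
  obtain ⟨T, hT⟩ := Nat.sSup_mem (Set.range_nonempty_iff_nonempty.2 ⟨T₀⟩) hbdd
  have hmax : ∀ T' : RootedTree ends r, ¬T.weight < T'.weight :=
    fun T' => not_lt.2 (hT ▸ le_csSup hbdd ⟨T', rfl⟩)
  have hsp : T.IsSpanning := by
    intro v hv
    induction hv with
    | refl => exact T.root_mem
    | tail _ hbc ih =>
      obtain ⟨e, he⟩ := hbc
      by_contra hc
      obtain ⟨T', hT'⟩ := exists_weight_lt_of_joins_notMem ih he hc
      exact hmax T' hT'
  refine ⟨T, hsp, fun x hx e y he => ?_⟩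
  by_contra! h
  obtain ⟨T', hT'⟩ := exists_weight_lt_of_not_isAncestor hx (mem_of_joins hsp hx he) he h.1 h.2
  exact hmax T' hT'

lemma max_depth_of_joins (he : Joins ends e x y) :
    max (T.depth (ends e).1) (T.depth (ends e).2) = max (T.depth x) (T.depth y) := by
  rcases he with h | h <;> simp [h, max_comm]

lemma color_pe (hv : v ∈ T.S) (hvr : v ≠ r) : T.color (T.pe v) = !(T.depth v).bodd := by
  have hd := T.depth_eq v hv hvr
  simp only [color, if_pos (show T.IsTreeEdge (T.pe v) from ⟨v, hv, hvr, rfl⟩),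
    max_depth_of_joins (T.joins_pe v hv hvr),
    max_eq_left (show T.depth (T.par v) ≤ T.depth v by omega)]

lemma color_of_not_isTreeEdge (h : ¬T.IsTreeEdge e) (he : Joins ends e x y)
    (hle : T.depth y ≤ T.depth x) : T.color e = (T.depth x).bodd := by
  simp only [color, if_neg h, max_depth_of_joins he, max_eq_left hle]

lemma inc_pe (hv : v ∈ T.S) (hvr : v ≠ r) (hw : Inc ends (T.pe v) w) : w = v ∨ w = T.par v :=
  (T.joins_pe v hv hvr).eq_or_eq_of_inc hw

lemma bothColorsAt_color (hloop : ∀ e, (ends e).1 ≠ (ends e).2) (hsp : T.IsSpanning)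
    (hn : T.IsNormal) (hv : v ∈ T.S) (hvr : v ≠ r) (hdeg : 1 < degree ends v) :
    BothColorsAt ends T.color v := by
  have hpe := (T.joins_pe v hv hvr).inc_left
  by_cases hchild : ∃ w ∈ T.S, w ≠ r ∧ T.par w = v
  · obtain ⟨w, hw, hwr, rfl⟩ := hchild
    refine bothColorsAt_of_ne (T.joins_pe w hw hwr).inc_right hpe ?_
    rw [color_pe hw hwr, color_pe hv hvr, T.depth_eq w hw hwr, Nat.bodd_succ]
    simp
  · obtain ⟨f, hf, hfv⟩ := Set.exists_ne_of_one_lt_ncard hdeg (T.pe v)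
    obtain ⟨z, hz⟩ := Inc.exists_joins hf
    have hnt : ¬T.IsTreeEdge f := by
      rintro ⟨u, hu, hur, rfl⟩
      rcases inc_pe hu hur hf with rfl | h
      · exact hfv rfl
      · exact hchild ⟨u, hu, hur, h.symm⟩
    have hzv : z ≠ v := (hz.ne hloop).symm
    have hanc : T.IsAncestor z v := by
      refine (hn v hv f z hz).resolve_left fun h => ?_
      obtain ⟨u, hu, hur, hpu, -⟩ := h.exists_child (mem_of_joins hsp hv hz) hzv.symm
      exact hchild ⟨u, hu, hur, hpu⟩
    refine bothColorsAt_of_ne hf hpe ?_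
    rw [color_of_not_isTreeEdge hnt hz (hanc.depth_lt hv hzv).le, color_pe hv hvr]
    simp

/-- By normality, every non-root vertex has all or none of its edges in the flipped set. -/
lemma exists_bothColorsAt_root_of_two_children (hsp : T.IsSpanning) (hn : T.IsNormal)
    {w₁ w₂ : V} (hw₁ : w₁ ∈ T.S) (hw₂ : w₂ ∈ T.S) (hw₁r : w₁ ≠ r) (hw₂r : w₂ ≠ r)
    (hp₁ : T.par w₁ = r) (hp₂ : T.par w₂ = r) (hne : w₁ ≠ w₂) :
    ∃ c, BothColorsAt ends c r ∧
      ∀ v ∈ T.S, v ≠ r → BothColorsAt ends T.color v → BothColorsAt ends c v := by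
  let C : Set V := {x | x ∈ T.S ∧ T.IsAncestor w₁ x}
  have hclosed : ∀ x ∈ C, ∀ e y, Joins ends e x y → y ∈ C ∨ y = r := by
    rintro x ⟨hx, hxw⟩ e y he
    have hy := mem_of_joins hsp hx he
    rcases hn x hx e y he with h | h
    · exact .inl ⟨hy, hxw.trans h⟩
    · rcases h.total hxw with h' | h'
      · by_cases hyw : y = w₁
        · exact .inl ⟨hy, hyw ▸ isAncestor_refl _⟩
        · exact .inr (eq_root_of_isAncestor_root (hp₁ ▸ h'.par_of_ne hyw))
      · exact .inl ⟨hy, h'⟩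
  let F : Set E := {e | ∃ x ∈ C, Inc ends e x}
  refine ⟨flipOn F T.color, ?_, fun v hv hvr hc => ?_⟩
  · have h₁ : T.pe w₁ ∈ F := ⟨w₁, ⟨hw₁, isAncestor_refl _⟩, (T.joins_pe w₁ hw₁ hw₁r).inc_left⟩
    have hd₁ := T.depth_eq w₁ hw₁ hw₁r
    have hd₂ := T.depth_eq w₂ hw₂ hw₂r
    rw [hp₁] at hd₁
    rw [hp₂] at hd₂
    have h₂ : T.pe w₂ ∉ F := by
      rintro ⟨x, ⟨-, hx⟩, hxe⟩
      rcases inc_pe hw₂ hw₂r hxe with rfl | rfl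
      · have := hx.depth_lt hw₂ hne
        omega
      · exact hw₁r (eq_root_of_isAncestor_root (hp₂ ▸ hx))
    refine bothColorsAt_of_ne (hp₁ ▸ (T.joins_pe w₁ hw₁ hw₁r).inc_right)
      (hp₂ ▸ (T.joins_pe w₂ hw₂ hw₂r).inc_right) ?_
    rw [flipOn_of_mem h₁, flipOn_of_notMem h₂, color_pe hw₁ hw₁r, color_pe hw₂ hw₂r, hd₁, hd₂]
    simp
  · by_cases hvC : v ∈ C
    · exact hc.flipOn_of_forall_mem fun e he => ⟨v, hvC, he⟩
    · refine hc.flipOn_of_forall_notMem fun e he ⟨x, hxC, hx⟩ => ?_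
      obtain ⟨z, hz⟩ := hx.exists_joins
      rcases hz.eq_or_eq_of_inc he with rfl | rfl
      · exact hvC hxC
      · exact (hclosed x hxC e _ hz).elim hvC hvr

/-- The flipped set is the cycle closed by `e₁` and the tree path from its lower end `y` to the
root: the tree coloring alternates along that path, and at the root `e₂` keeps its color. -/
lemma exists_bothColorsAt_root_of_two_nontree (hsp : T.IsSpanning) {e₁ e₂ : E}
    (he₁ : Inc ends e₁ r) (he₂ : Inc ends e₂ r) (h₁ : ¬T.IsTreeEdge e₁) (h₂ : ¬T.IsTreeEdge e₂)
    (hne : e₁ ≠ e₂) :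
    ∃ c, BothColorsAt ends c r ∧
      ∀ v ∈ T.S, v ≠ r → BothColorsAt ends T.color v → BothColorsAt ends c v := by
  by_cases hc : T.color e₁ ≠ T.color e₂
  · exact ⟨T.color, bothColorsAt_of_ne he₁ he₂ hc, fun _ _ _ h => h⟩
  obtain ⟨y, hy⟩ := he₁.exists_joins
  have hyS : y ∈ T.S := mem_of_joins hsp T.root_mem hy
  let F : Set E := {e | e = e₁ ∨ ∃ u, T.IsAncestor u y ∧ u ≠ r ∧ T.pe u = e}
  refine ⟨flipOn F T.color, ?_, fun v hv hvr hcv => ?_⟩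
  · have h₂F : e₂ ∉ F := by
      rintro (h | ⟨u, hu, hur, rfl⟩)
      · exact hne h.symm
      · exact h₂ ⟨u, hu.mem hyS, hur, rfl⟩
    refine bothColorsAt_of_ne he₁ he₂ ?_
    rw [flipOn_of_mem (.inl rfl), flipOn_of_notMem h₂F, not_not.1 hc]
    simp
  · by_cases hvy : T.IsAncestor v y
    · have hpe : T.pe v ∈ F := .inr ⟨v, hvy, hvr, rfl⟩
      have hvpe := (T.joins_pe v hv hvr).inc_left
      by_cases hyv : v = y
      · subst hyv
        refine bothColorsAt_of_ne hy.inc_right hvpe ?_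
        rw [flipOn_of_mem (.inl rfl), flipOn_of_mem hpe,
          color_of_not_isTreeEdge h₁ hy.symm (by rw [T.depth_root]; exact Nat.zero_le _),
          color_pe hv hvr]
        simp
      · obtain ⟨u, hu, hur, rfl, huy⟩ := hvy.exists_child hyS hyv
        refine bothColorsAt_of_ne (T.joins_pe u hu hur).inc_right hvpe ?_
        rw [flipOn_of_mem (.inr ⟨u, huy, hur, rfl⟩), flipOn_of_mem hpe, color_pe hu hur,
          color_pe hv hvr, T.depth_eq u hu hur, Nat.bodd_succ]
        simp
    · refine hcv.flipOn_of_forall_notMem fun e he hF => ?_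
      rcases hF with rfl | ⟨u, hu, hur, rfl⟩
      · rcases hy.eq_or_eq_of_inc he with rfl | rfl
        · exact hvr rfl
        · exact hvy (isAncestor_refl _)
      · rcases inc_pe (hu.mem hyS) hur he with rfl | rfl
        · exact hvy hu
        · exact hvy hu.par

lemma exists_bothColorsAt_root [Finite E] (hsp : T.IsSpanning) (hn : T.IsNormal)
    (hdeg : 2 < degree ends r) :
    ∃ c, BothColorsAt ends c r ∧
      ∀ v ∈ T.S, v ≠ r → BothColorsAt ends T.color v → BothColorsAt ends c v := by
  by_cases hch : ∃ w₁ ∈ T.S, ∃ w₂ ∈ T.S,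
      w₁ ≠ r ∧ w₂ ≠ r ∧ T.par w₁ = r ∧ T.par w₂ = r ∧ w₁ ≠ w₂
  · obtain ⟨w₁, hw₁, w₂, hw₂, hw₁r, hw₂r, hp₁, hp₂, hne⟩ := hch
    exact exists_bothColorsAt_root_of_two_children hsp hn hw₁ hw₂ hw₁r hw₂r hp₁ hp₂ hne
  have hpar : ∀ {u}, u ∈ T.S → u ≠ r → Inc ends (T.pe u) r → T.par u = r := fun hu hur h =>
    ((inc_pe hu hur h).resolve_left (Ne.symm hur)).symm
  have htree : {e | Inc ends e r ∧ T.IsTreeEdge e}.ncard ≤ 1 := by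
    refine (Set.ncard_le_one_iff).2 ?_
    rintro _ _ ⟨ha, u, hu, hur, rfl⟩ ⟨hb, w, hw, hwr, rfl⟩
    by_contra h
    exact hch ⟨u, hu, w, hw, hur, hwr, hpar hu hur ha, hpar hw hwr hb, fun huw => h (huw ▸ rfl)⟩
  have hunion : {e | Inc ends e r} =
      {e | Inc ends e r ∧ ¬T.IsTreeEdge e} ∪ {e | Inc ends e r ∧ T.IsTreeEdge e} := by
    ext e
    by_cases h : T.IsTreeEdge e <;> simp [h]
  have hnontree : 1 < {e | Inc ends e r ∧ ¬T.IsTreeEdge e}.ncard := by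
    have := Set.ncard_union_le {e | Inc ends e r ∧ ¬T.IsTreeEdge e}
      {e | Inc ends e r ∧ T.IsTreeEdge e}
    rw [degree, hunion] at hdeg
    omega
  obtain ⟨e₁, e₂, ⟨he₁, h₁⟩, ⟨he₂, h₂⟩, hne⟩ := (Set.one_lt_ncard_iff).1 hnontree
  exact exists_bothColorsAt_root_of_two_nontree hsp he₁ he₂ h₁ h₂ hne

end RootedTree

variable (ends) in
noncomputable def trueEdgesAt [Fintype E] (c : E → Bool) (w : V) : Finset E := by
  classical exact Finset.univ.filter fun e => Inc ends e w ∧ c e = true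

section Parity

open Finset

variable [Fintype E] {c : E → Bool}

lemma degree_eq_card [DecidablePred (Inc ends · w)] :
    degree ends w = #(univ.filter (Inc ends · w)) := by
  rw [degree, ← Set.ncard_coe_finset, coe_filter]
  simp

lemma card_trueEdgesAt_le : #(trueEdgesAt ends c w) ≤ degree ends w := by
  classical
  rw [degree_eq_card]
  exact card_le_card fun e he => by simp_all [trueEdgesAt]

lemma card_trueEdgesAt_eq_one_iff (h2 : degree ends w = 2) :
    #(trueEdgesAt ends c w) = 1 ↔ BothColorsAt ends c w := by
  classical
  let I := univ.filter (Inc ends · w)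
  have hsplit := card_filter_add_card_filter_not (s := I) (c · = true)
  have htrue : trueEdgesAt ends c w = I.filter (c · = true) := by ext; simp [trueEdgesAt, I]
  rw [← degree_eq_card, h2] at hsplit
  rw [htrue]
  constructor
  · intro h
    obtain ⟨a, ha⟩ := card_pos.1 (by omega : 0 < #(I.filter (c · = true)))
    obtain ⟨b, hb⟩ := card_pos.1 (by omega : 0 < #(I.filter (¬c · = true)))
    simp only [I, mem_filter, mem_univ, true_and, Bool.not_eq_true] at ha hb
    exact ⟨⟨a, ha⟩, ⟨b, hb⟩⟩
  · rintro ⟨⟨a, ha, hca⟩, ⟨b, hb, hcb⟩⟩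
    have h₁ : 0 < #(I.filter (c · = true)) := card_pos.2 ⟨a, by simp [I, ha, hca]⟩
    have h₂ : 0 < #(I.filter (¬c · = true)) := card_pos.2 ⟨b, by simp [I, hb, hcb]⟩
    omega

lemma even_sum_card_trueEdgesAt (hloop : ∀ e, (ends e).1 ≠ (ends e).2) (c : E → Bool)
    {K : Finset V} (hK : ∀ e v w, Inc ends e v → Inc ends e w → v ∈ K → w ∈ K) :
    Even (∑ w ∈ K, #(trueEdgesAt ends c w)) := by
  classical
  let rel : V → E → Prop := fun w e => Inc ends e w
  have habove : ∀ w, trueEdgesAt ends c w = (univ.filter (c · = true)).bipartiteAbove rel w :=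
    fun w => by ext; simp [trueEdgesAt, rel, and_comm]
  simp only [habove]
  rw [sum_card_bipartiteAbove_eq_sum_card_bipartiteBelow]
  refine even_sum _ fun e _ => ?_
  by_cases he : (ends e).1 ∈ K
  · have hends : K.bipartiteBelow rel e = {(ends e).1, (ends e).2} := by
      ext w
      rw [mem_bipartiteBelow, mem_insert, mem_singleton]
      constructor
      · rintro ⟨-, h | h⟩ <;> simp [h]
      · rintro (rfl | rfl)
        · exact ⟨he, .inl rfl⟩
        · exact ⟨hK e _ _ (.inl rfl) (.inr rfl) he, .inr rfl⟩
    rw [hends, card_pair (hloop e)]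
    exact even_two
  · have hends : K.bipartiteBelow rel e = ∅ := by
      refine eq_empty_of_forall_notMem fun w hw => ?_
      obtain ⟨hwK, hw⟩ := (mem_bipartiteBelow rel).1 hw
      exact he (hK e w _ hw (.inl rfl) hwK)
    rw [hends, card_empty]
    exact even_iff_two_dvd.2 (dvd_zero 2)

lemma bothColorsAt_iff_even [Fintype V] (hloop : ∀ e, (ends e).1 ≠ (ends e).2) {r : V}
    (h2 : ∀ w, MGReach ends r w → degree ends w = 2)
    (hc : ∀ w, MGReach ends r w → w ≠ r → BothColorsAt ends c w) :
    BothColorsAt ends c r ↔ Even (Set.ncard {w | MGReach ends r w}) := by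
  classical
  let K := univ.filter (MGReach ends r ·)
  have hrK : r ∈ K := mem_filter.2 ⟨mem_univ r, .refl⟩
  have hKcard : Set.ncard {w | MGReach ends r w} = #K := by
    rw [← Set.ncard_coe_finset, coe_filter]
    simp
  have heven := even_sum_card_trueEdgesAt hloop c (K := K) fun e v w hv hw hvK =>
    mem_filter.2 ⟨mem_univ w, MGReach.of_inc (mem_filter.1 hvK).2 hv hw⟩
  have hone : ∀ w ∈ K.erase r, #(trueEdgesAt ends c w) = 1 := fun w hw => by
    have hw' := (mem_filter.1 (mem_of_mem_erase hw)).2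
    exact (card_trueEdgesAt_eq_one_iff (h2 w hw')).2 (hc w hw' (ne_of_mem_erase hw))
  rw [← add_sum_erase K _ hrK, sum_congr rfl hone, sum_const, smul_eq_mul, mul_one,
    card_erase_of_mem hrK, Nat.even_iff] at heven
  have hle : #(trueEdgesAt ends c r) ≤ 2 := h2 r .refl ▸ card_trueEdgesAt_le
  have hKpos : 0 < #K := card_pos.2 ⟨r, hrK⟩
  rw [← card_trueEdgesAt_eq_one_iff (h2 r .refl), hKcard, Nat.even_iff]
  omega

end Parity

lemma exists_bothColorsAt_of_forall_component {P : V → Prop}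
    (h : ∀ r, ∃ c : E → Bool, ∀ v, MGReach ends r v → P v → BothColorsAt ends c v) :
    ∃ c : E → Bool, ∀ v, P v → BothColorsAt ends c v := by
  choose cs hcs using h
  let s : Setoid V := ⟨MGReach ends, ⟨fun _ => .refl, MGReach.symm, .trans⟩⟩
  let rep : V → V := fun v => (Quotient.mk s v).out
  have hrep : ∀ v, MGReach ends (rep v) v := fun v => Quotient.mk_out (s := s) v
  have hrep_eq : ∀ {v w}, MGReach ends v w → rep v = rep w := fun h => by
    simp only [rep, Quotient.sound (s := s) h]
  refine ⟨fun e => cs (rep (ends e).1) e, fun v hv => (hcs (rep v) v (hrep v) hv).congr ?_⟩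
  intro e he
  rw [hrep_eq (MGReach.of_inc .refl (.inl rfl) he)]

section Component

variable [Fintype V] [Nonempty E]

lemma exists_bothColorsAt_off_root (hloop : ∀ e, (ends e).1 ≠ (ends e).2) (r : V) :
    ∃ c : E → Bool, ∀ v, MGReach ends r v → v ≠ r → 1 < degree ends v →
      BothColorsAt ends c v := by
  obtain ⟨τ, hsp, hn⟩ := RootedTree.exists_isSpanning_isNormal ends r
  exact ⟨τ.color, fun v hv hvr hdeg => τ.bothColorsAt_color hloop hsp hn (hsp v hv) hvr hdeg⟩

lemma exists_bothColorsAt_of_two_lt_degree [Finite E] (hloop : ∀ e, (ends e).1 ≠ (ends e).2)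
    (r : V) (hdeg : ∀ v, MGReach ends r v → 1 < degree ends v) (hr : 2 < degree ends r) :
    ∃ c : E → Bool, ∀ v, MGReach ends r v → BothColorsAt ends c v := by
  obtain ⟨τ, hsp, hn⟩ := RootedTree.exists_isSpanning_isNormal ends r
  obtain ⟨c, hcr, hc⟩ := τ.exists_bothColorsAt_root hsp hn hr
  refine ⟨c, fun v hv => ?_⟩
  by_cases hvr : v = r
  · exact hvr ▸ hcr
  · exact hc v (hsp v hv) hvr (τ.bothColorsAt_color hloop hsp hn (hsp v hv) hvr (hdeg v hv))

lemma exists_bothColorsAt_of_two_regular [Fintype E] (hloop : ∀ e, (ends e).1 ≠ (ends e).2)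
    (r : V) (h2 : ∀ v, MGReach ends r v → degree ends v = 2)
    (heven : Even (Set.ncard {w | MGReach ends r w})) :
    ∃ c : E → Bool, ∀ v, MGReach ends r v → BothColorsAt ends c v := by
  obtain ⟨c, hc⟩ := exists_bothColorsAt_off_root hloop r
  have hoff : ∀ v, MGReach ends r v → v ≠ r → BothColorsAt ends c v :=
    fun v hv hvr => hc v hv hvr (by rw [h2 v hv]; norm_num)
  refine ⟨c, fun v hv => ?_⟩
  by_cases hvr : v = r
  · exact hvr ▸ (bothColorsAt_iff_even hloop h2 hoff).2 heven
  · exact hoff v hv hvr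

end Component

lemma exists_bothColorsAt_component [Fintype V] [Fintype E]
    (hloop : ∀ e, (ends e).1 ≠ (ends e).2) {T : Set V} (hdeg : ∀ v ∉ T, 2 ≤ degree ends v)
    (hodd : ∀ v, ((∀ w, MGReach ends v w → w ∉ T) ∧
      (∀ w, MGReach ends v w → degree ends w = 2)) → ¬Odd (Set.ncard {w | MGReach ends v w}))
    (r : V) : ∃ c : E → Bool, ∀ v, MGReach ends r v → v ∉ T → BothColorsAt ends c v := by
  by_cases hu : ∃ u ∉ T, MGReach ends r u
  swap
  · push Not at hu
    exact ⟨fun _ => true, fun v hv hvT => absurd hv (hu v hvT)⟩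
  obtain ⟨u, huT, -⟩ := hu
  have : Nonempty E := by
    have := hdeg u huT
    obtain ⟨e, -⟩ := Set.nonempty_of_ncard_ne_zero (s := {e | Inc ends e u})
      (by unfold degree at this; omega)
    exact ⟨e⟩
  by_cases ht : ∃ t ∈ T, MGReach ends r t
  · obtain ⟨t, htT, hrt⟩ := ht
    obtain ⟨c, hc⟩ := exists_bothColorsAt_off_root hloop t
    exact ⟨c, fun v hv hvT => hc v ((MGReach.symm hrt).trans hv) (fun h => hvT (h ▸ htT))
      (hdeg v hvT)⟩
  push Not at ht
  have hfree : ∀ w, MGReach ends r w → w ∉ T := fun w hw hwT => ht w hwT hw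
  by_cases h3 : ∃ s, MGReach ends r s ∧ 2 < degree ends s
  · obtain ⟨s, hrs, hs⟩ := h3
    obtain ⟨c, hc⟩ := exists_bothColorsAt_of_two_lt_degree hloop s
      (fun v hv => hdeg v (hfree v (hrs.trans hv))) hs
    exact ⟨c, fun v hv _ => hc v ((MGReach.symm hrs).trans hv)⟩
  push Not at h3
  have h2 : ∀ w, MGReach ends r w → degree ends w = 2 :=
    fun w hw => le_antisymm (h3 w hw) (hdeg w (hfree w hw))
  obtain ⟨c, hc⟩ := exists_bothColorsAt_of_two_regular hloop r h2
    (Nat.not_odd_iff_even.1 (hodd r ⟨hfree, h2⟩))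
  exact ⟨c, fun v hv _ => hc v hv⟩

end Multigraph

open Multigraph in
theorem edge_two_coloring_no_untagged_monochromatic_general {V E : Type}
    [Fintype V] [Fintype E]
    (ends : E → V × V) (hloop : ∀ e, (ends e).1 ≠ (ends e).2)
    (T : Finset V) :
    (∃ c : E → Bool, ∀ v ∉ T,
      (∃ e, ((ends e).1 = v ∨ (ends e).2 = v) ∧ c e = true) ∧
      (∃ e, ((ends e).1 = v ∨ (ends e).2 = v) ∧ c e = false)) ↔
    ((∀ v ∉ T, 2 ≤ Set.ncard {e : E | (ends e).1 = v ∨ (ends e).2 = v}) ∧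
     (∀ v : V,
        ((∀ w, MGReach ends v w → w ∉ T) ∧
         (∀ w, MGReach ends v w →
            Set.ncard {e : E | (ends e).1 = w ∨ (ends e).2 = w} = 2)) →
        ¬ Odd (Set.ncard {w | MGReach ends v w}))) := by
  constructor
  · rintro ⟨c, hc⟩
    refine ⟨fun v hv => BothColorsAt.one_lt_degree (hc v hv), fun v ⟨hT, h2⟩ => ?_⟩
    exact Nat.not_odd_iff_even.2 ((bothColorsAt_iff_even hloop h2
      fun w hw _ => hc w (hT w hw)).1 (hc v (hT v .refl)))
  · rintro ⟨hdeg, hodd⟩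
    exact exists_bothColorsAt_of_forall_component
      (exists_bothColorsAt_component hloop (T := ↑T) hdeg hodd)

/-- A finite loop-free multigraph with tagged vertex set `T` admits an
edge 2-coloring such that every untagged vertex is incident to edges of both colors
iff (i) every untagged vertex has degree at least 2, and (ii) no connected component
avoiding `T` is a simple odd cycle.  A component is a simple odd cycle iff it is
2-regular (every vertex is incident to exactly 2 edges) with an odd number of
vertices. -/
theorem edge_two_coloring_no_untagged_monochromatic {V E : Type}
    [Fintype V] [Fintype E] [DecidableEq V]
    (ends : E → V × V) (hloop : ∀ e, (ends e).1 ≠ (ends e).2)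
    (T : Finset V) :
    (∃ c : E → Bool, ∀ v ∉ T,
      (∃ e, ((ends e).1 = v ∨ (ends e).2 = v) ∧ c e = true) ∧
      (∃ e, ((ends e).1 = v ∨ (ends e).2 = v) ∧ c e = false)) ↔
    ((∀ v ∉ T, 2 ≤ Set.ncard {e : E | (ends e).1 = v ∨ (ends e).2 = v}) ∧
     (∀ v : V,
        ((∀ w, MGReach ends v w → w ∉ T) ∧
         (∀ w, MGReach ends v w →
            Set.ncard {e : E | (ends e).1 = w ∨ (ends e).2 = w} = 2)) →
        ¬ Odd (Set.ncard {w | MGReach ends v w}))) :=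
  edge_two_coloring_no_untagged_monochromatic_general ends hloop T
end

section
/- Let φ be a 2-CNF with variable set vars(φ) of size n and clause set of size m (every clause has exactly two literals), and let G be the undirected graph with vertex set {x⁺, x⁻ : x ∈ vars(φ)}, with an edge {x⁺, x⁻} for every variable x and, for every clause, an edge between the two vertices corresponding to its literals (where literal x corresponds to x⁺ and literal ¬x to x⁻). Then, for every k ≥ 0, one can delete at most k variables from φ (removing all clauses containing a deleted variable) so that the remaining formula is satisfiable, if and only if G has a vertex cover of size at most n + k. -/
/-!
A deletion set `D` with an assignment `β` of the remaining variables gives the vertex cover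
taking both literals of every `x ∈ D` and the literal made true by `β` of every other variable;
it has `2|D| + (n - |D|) = n + |D|` vertices. Conversely, a vertex cover `S` contains a literal of
every variable, so `|S| ≥ n + |D|`, where `D` is the set of variables with both literals in `S`.
Deleting `D` and reading `β x := [x⁺ ∈ S]` satisfies every clause avoiding `D`: the literal of the
clause that lies in `S` is the only literal of its variable in `S`, hence true under `β`.
-/

open Finset

variable {α : Type*} [DecidableEq α]

section AssignmentCover

def assignmentCover (V D : Finset α) (β : α → Bool) : Finset (α × Bool) :=
  D ×ˢ univ ∪ (V \ D).image fun x => (x, β x)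

variable {V D : Finset α} {β : α → Bool}

theorem mem_assignmentCover {p : α × Bool} :
    p ∈ assignmentCover V D β ↔ p.1 ∈ D ∨ p.1 ∈ V ∧ β p.1 = p.2 := by
  obtain ⟨x, b⟩ := p
  simp only [assignmentCover, mem_union, mem_product, mem_univ, and_true, mem_image,
    mem_sdiff, Prod.mk.injEq]
  constructor
  · rintro (hx | ⟨y, ⟨hy, -⟩, rfl, rfl⟩)
    exacts [.inl hx, .inr ⟨hy, rfl⟩]
  · rintro (hx | ⟨hx, rfl⟩)
    · exact .inl hx
    · by_cases hxD : x ∈ D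
      exacts [.inl hxD, .inr ⟨x, ⟨hx, hxD⟩, rfl, rfl⟩]

theorem card_assignmentCover_le (hD : D ⊆ V) :
    #(assignmentCover V D β) ≤ #V + #D := by
  have hV : #(V \ D) + #D = #V := card_sdiff_add_card_eq_card hD
  calc #(assignmentCover V D β)
      ≤ #(D ×ˢ (univ : Finset Bool)) + #((V \ D).image fun x => (x, β x)) := card_union_le _ _
    _ ≤ 2 * #D + #(V \ D) := by
        rw [card_product, card_univ, Fintype.card_bool, mul_comm]
        exact Nat.add_le_add_left card_image_le _
    _ = #V + #D := by omega

theorem exists_mem_assignmentCover_of_clause {C : Finset (α × Bool)} (hCV : ∀ l ∈ C, l.1 ∈ V)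
    (hsat : (∀ l ∈ C, l.1 ∉ D) → ∃ l ∈ C, β l.1 = l.2) :
    ∃ l ∈ C, l ∈ assignmentCover V D β := by
  by_cases hCD : ∃ l ∈ C, l.1 ∈ D
  · obtain ⟨l, hl, hlD⟩ := hCD
    exact ⟨l, hl, mem_assignmentCover.2 (.inl hlD)⟩
  · obtain ⟨l, hl, hβl⟩ := hsat fun l hl hlD => hCD ⟨l, hl, hlD⟩
    exact ⟨l, hl, mem_assignmentCover.2 (.inr ⟨hCV l hl, hβl⟩)⟩

end AssignmentCover

section DoublyCovered

def doublyCovered (S : Finset (α × Bool)) (V : Finset α) : Finset α :=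
  V.filter fun x => (x, true) ∈ S ∧ (x, false) ∈ S

def coverAssignment (S : Finset (α × Bool)) (x : α) : Bool :=
  decide ((x, true) ∈ S)

variable {S : Finset (α × Bool)} {V : Finset α}

theorem card_add_card_doublyCovered_le (hS : ∀ x ∈ V, (x, true) ∈ S ∨ (x, false) ∈ S) :
    #V + #(doublyCovered S V) ≤ #S := by
  set T := V.filter fun x => (x, true) ∈ S
  set F := V.filter fun x => (x, false) ∈ S
  have hunion : T ∪ F = V := by
    rw [← filter_or, filter_true_of_mem hS]
  have hdisj : Disjoint (T ×ˢ {true}) (F ×ˢ {false}) :=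
    disjoint_product.2 (.inr (by simp))
  have hsub : T ×ˢ {true} ∪ F ×ˢ {false} ⊆ S := by
    rintro ⟨x, b⟩ hx
    simp only [mem_union, mem_product, mem_singleton, T, F, mem_filter] at hx
    rcases hx with ⟨⟨-, hx⟩, rfl⟩ | ⟨⟨-, hx⟩, rfl⟩ <;> exact hx
  calc #V + #(doublyCovered S V) = #T + #F := by
        rw [← card_union_add_card_inter T F, hunion, doublyCovered, filter_and]
    _ = #(T ×ˢ {true} ∪ F ×ˢ {false}) := by
        simp only [card_union_of_disjoint hdisj, card_product, card_singleton, mul_one]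
    _ ≤ #S := card_le_card hsub

theorem coverAssignment_eq_of_mem {l : α × Bool} (hl : l ∈ S) (hlV : l.1 ∈ V)
    (hlD : l.1 ∉ doublyCovered S V) : coverAssignment S l.1 = l.2 := by
  obtain ⟨x, b⟩ := l
  simp only [doublyCovered, mem_filter, not_and] at hlD
  cases b
  · simpa [coverAssignment] using fun ht => hlD hlV ht hl
  · simpa [coverAssignment] using hl

end DoublyCovered

theorem variable_deletion_2sat_iff_vc_above_matching_general
    (φ : Multiset (Finset (ℕ × Bool)))
    (Vφ : Finset ℕ) (hV : ∀ x : ℕ, x ∈ Vφ ↔ ∃ C ∈ φ, ∃ l ∈ C, l.1 = x)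
    (k : ℕ) :
    (∃ D : Finset ℕ, D ⊆ Vφ ∧ D.card ≤ k ∧
      ∃ β : ℕ → Bool, ∀ C ∈ φ, (∀ l ∈ C, l.1 ∉ D) → ∃ l ∈ C, β l.1 = l.2) ↔
    (∃ S : Finset (ℕ × Bool),
      (∀ p ∈ S, p.1 ∈ Vφ) ∧
      (∀ x ∈ Vφ, (x, true) ∈ S ∨ (x, false) ∈ S) ∧
      (∀ C ∈ φ, ∃ l ∈ C, l ∈ S) ∧
      S.card ≤ Vφ.card + k) := by
  have hφV : ∀ C ∈ φ, ∀ l ∈ C, l.1 ∈ Vφ := fun C hC l hl => (hV l.1).2 ⟨C, hC, l, hl, rfl⟩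
  constructor
  · rintro ⟨D, hDV, hDk, β, hβ⟩
    refine ⟨assignmentCover Vφ D β, fun p hp => ?_, fun x hx => ?_,
      fun C hC => exists_mem_assignmentCover_of_clause (hφV C hC) (hβ C hC),
      (card_assignmentCover_le hDV).trans (by omega)⟩
    · rcases mem_assignmentCover.1 hp with hpD | ⟨hpV, -⟩
      exacts [hDV hpD, hpV]
    · simp only [mem_assignmentCover]
      cases β x <;> simp [hx]
  · rintro ⟨S, -, hcover, hclause, hcard⟩
    refine ⟨doublyCovered S Vφ, filter_subset _ _,
      by have := card_add_card_doublyCovered_le hcover; omega, coverAssignment S,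
      fun C hC hCD => ?_⟩
    obtain ⟨l, hl, hlS⟩ := hclause C hC
    exact ⟨l, hl, coverAssignment_eq_of_mem hlS (hφV C hC l hl) (hCD l hl)⟩

/-- For a 2-CNF `φ` with variable set `Vφ` of size `n`, consider the
graph on the literal vertices `(x, true) = x⁺` and `(x, false) = x⁻` (for `x ∈ Vφ`)
with the matching edges `{x⁺, x⁻}` and, for every clause, an edge between the
vertices of its two literals.  Then one can delete at most `k` variables (removing
all clauses containing them) so that the rest of `φ` is satisfiable iff this graph
has a vertex cover of size at most `n + k`.  A vertex cover is a set `S` of literal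
vertices meeting every matching edge and every clause edge. -/
theorem variable_deletion_2sat_iff_vc_above_matching
    (φ : Multiset (Finset (ℕ × Bool))) (h2 : ∀ C ∈ φ, C.card = 2)
    (Vφ : Finset ℕ) (hV : ∀ x : ℕ, x ∈ Vφ ↔ ∃ C ∈ φ, ∃ l ∈ C, l.1 = x)
    (k : ℕ) :
    (∃ D : Finset ℕ, D ⊆ Vφ ∧ D.card ≤ k ∧
      ∃ β : ℕ → Bool, ∀ C ∈ φ, (∀ l ∈ C, l.1 ∉ D) → ∃ l ∈ C, β l.1 = l.2) ↔
    (∃ S : Finset (ℕ × Bool),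
      (∀ p ∈ S, p.1 ∈ Vφ) ∧
      (∀ x ∈ Vφ, (x, true) ∈ S ∨ (x, false) ∈ S) ∧
      (∀ C ∈ φ, ∃ l ∈ C, l ∈ S) ∧
      S.card ≤ Vφ.card + k) :=
  variable_deletion_2sat_iff_vc_above_matching_general φ Vφ hV k
end

section
/- Let φ be a CNF formula in which every variable occurs at most twice, with no empty clauses. Let G(φ) be the multigraph whose vertices are the clauses of φ, with one edge {C, C'} for every variable x occurring positively in C and negatively in C', and let a clause be tagged if it contains a pure literal (a literal whose variable does not occur with the opposite sign anywhere in φ). If k is the number of connected components of G(φ) that are trees containing no tagged vertex, then the maximum number of clauses of φ simultaneously satisfiable by one assignment is exactly m − k, where m is the number of clauses of φ. -/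
/-- Reachability between clauses (indexed by `Fin m`) in the tagged graph `G(φ)`:
two clauses are adjacent iff some variable occurs positively in one and negatively
in the other. -/
def ClauseReach (m : ℕ) (φ : Fin m → Finset (ℕ × Bool)) : Fin m → Fin m → Prop :=
  Relation.ReflTransGen (fun i j => ∃ x : ℕ,
    ((x, true) ∈ φ i ∧ (x, false) ∈ φ j) ∨ ((x, true) ∈ φ j ∧ (x, false) ∈ φ i))

/-- A clause is tagged iff it contains a pure literal, i.e. a literal whose
complement occurs in no clause. -/
def Tagged (m : ℕ) (φ : Fin m → Finset (ℕ × Bool)) (i : Fin m) : Prop :=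
  ∃ l ∈ φ i, ∀ j : Fin m, (l.1, !l.2) ∉ φ j

/-!
Under any assignment, each satisfied clause of an untagged component `K` is satisfied through
a literal whose complement occurs, i.e. through an edge of `K`, and since a variable occurs at
most twice, different clauses use different edges. A tree has one edge fewer than vertices, so
every untagged tree component contains an unsatisfied clause.

Conversely, delete one clause from each untagged tree component. Every set `S` of remaining
untagged clauses meets at least `|S|` edges: if some edge has exactly one end in `S`, remove that
end and induct; otherwise `S` is a union of components, none of them an untagged tree, and a
connected graph that is not a tree has at least as many edges as vertices. By Hall's theorem
each remaining untagged clause gets an edge of its own, whose literal in the clause is made true,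
and pure literals are made true as well.
-/

open Finset

namespace CNF2

variable {m : ℕ} (φ : Fin m → Finset (ℕ × Bool))

def Adj (i j : Fin m) : Prop :=
  ∃ x : ℕ,
    ((x, true) ∈ φ i ∧ (x, false) ∈ φ j) ∨ ((x, true) ∈ φ j ∧ (x, false) ∈ φ i)

instance : Std.Symm (Adj φ) := ⟨fun _ _ ⟨x, h⟩ => ⟨x, h.symm⟩⟩

def AtMostTwice : Prop :=
  ∀ x : ℕ, ((univ : Finset (Fin m × Bool)).filter (fun p => (x, p.2) ∈ φ p.1)).card ≤ 2

open Classical in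
noncomputable def component (i : Fin m) : Finset (Fin m) :=
  univ.filter (ClauseReach m φ i)

/-- The edges of `G(φ)` at clause `i`, loops included. -/
def incidentVars (i : Fin m) : Finset ℕ :=
  ((φ i).filter (fun l => ∃ j, (l.1, !l.2) ∈ φ j)).image Prod.fst

/-- The edges of `G(φ)` whose positive end lies in `K`. -/
def edgeVars (K : Set (Fin m)) : Set ℕ :=
  {x | ∃ i j, i ∈ K ∧ (x, true) ∈ φ i ∧ (x, false) ∈ φ j}

variable {φ}

lemma clauseReach_symm {i j : Fin m} (h : ClauseReach m φ i j) : ClauseReach m φ j i :=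
  (Relation.ReflTransGen.stdSymm (r := Adj φ)).symm _ _ h

lemma adj_of_mem {x : ℕ} {b : Bool} {i j : Fin m} (hi : (x, b) ∈ φ i) (hj : (x, !b) ∈ φ j) :
    Adj φ i j := by
  cases b
  · exact ⟨x, .inr ⟨hj, hi⟩⟩
  · exact ⟨x, .inl ⟨hi, hj⟩⟩

lemma adj_iff {i j : Fin m} : Adj φ i j ↔ ∃ x b, (x, b) ∈ φ i ∧ (x, !b) ∈ φ j :=
  ⟨fun ⟨x, h⟩ => h.elim (fun h => ⟨x, true, h⟩) (fun h => ⟨x, false, h.2, h.1⟩),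
    fun ⟨_, _, hi, hj⟩ => adj_of_mem hi hj⟩

lemma AtMostTwice.eq_of_mem (h : AtMostTwice φ) {x : ℕ} {b : Bool} {i j l : Fin m}
    (hi : (x, b) ∈ φ i) (hj : (x, b) ∈ φ j) (hl : (x, !b) ∈ φ l) : i = j := by
  by_contra hij
  refine (h x).not_gt (two_lt_card.2 ⟨(i, b), ?_, (j, b), ?_, (l, !b), ?_, ?_, ?_, ?_⟩) <;>
    simp_all

lemma AtMostTwice.eq_or_eq (h : AtMostTwice φ) {x : ℕ} {b c : Bool} {i j t : Fin m}
    (hi : (x, b) ∈ φ i) (hj : (x, !b) ∈ φ j) (ht : (x, c) ∈ φ t) : t = i ∨ t = j := by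
  obtain rfl | rfl : c = b ∨ c = !b := by cases b <;> cases c <;> simp
  · exact .inl (h.eq_of_mem ht hi hj)
  · exact .inr (h.eq_of_mem ht hj (by simpa using hi))

@[simp]
lemma mem_component {i j : Fin m} : j ∈ component φ i ↔ ClauseReach m φ i j := by
  simp [component]

lemma coe_component (i : Fin m) :
    (component φ i : Set (Fin m)) = {j | ClauseReach m φ i j} := by
  ext; simp

lemma mem_component_self (i : Fin m) : i ∈ component φ i :=
  mem_component.2 .refl

lemma mem_component_of_adj {i j l : Fin m} (hj : j ∈ component φ i) (h : Adj φ j l) :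
    l ∈ component φ i :=
  mem_component.2 ((mem_component.1 hj).tail h)

lemma component_eq_of_mem {i j : Fin m} (hj : j ∈ component φ i) :
    component φ j = component φ i := by
  have hij : ClauseReach m φ i j := mem_component.1 hj
  ext l
  simp only [mem_component]
  exact ⟨hij.trans, (clauseReach_symm hij).trans⟩

lemma component_subset {S : Finset (Fin m)} (hS : ∀ j ∈ S, ∀ l, Adj φ j l → l ∈ S)
    {i : Fin m} (hi : i ∈ S) : component φ i ⊆ S := by
  intro j hj
  have hij := mem_component.1 hj
  clear hj
  induction hij with
  | refl => exact hi
  | tail _ hadj ih => exact hS _ ih _ hadj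

lemma mem_incidentVars {x : ℕ} {i : Fin m} :
    x ∈ incidentVars φ i ↔ ∃ b, (x, b) ∈ φ i ∧ ∃ j, (x, !b) ∈ φ j := by
  simp [incidentVars]

lemma AtMostTwice.mem_component_of_mem_incidentVars (h : AtMostTwice φ) {i j t : Fin m}
    {x : ℕ} {c : Bool} (hj : j ∈ component φ i) (hx : x ∈ incidentVars φ j)
    (ht : (x, c) ∈ φ t) : t ∈ component φ i := by
  obtain ⟨b, hb, j', hj'⟩ := mem_incidentVars.1 hx
  rcases h.eq_or_eq hb hj' ht with rfl | rfl
  · exact hj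
  · exact mem_component_of_adj hj (adj_of_mem hb hj')

lemma edgeVars_finite (K : Set (Fin m)) : (edgeVars φ K).Finite := by
  refine (univ.biUnion (incidentVars φ)).finite_toSet.subset ?_
  rintro x ⟨i, j, -, hi, hj⟩
  exact mem_biUnion.2 ⟨i, mem_univ i, mem_incidentVars.2 ⟨true, hi, j, hj⟩⟩

lemma edgeVars_component (i : Fin m) :
    edgeVars φ (component φ i) = ↑((component φ i).biUnion (incidentVars φ)) := by
  ext x
  simp only [edgeVars, Set.mem_ofPred_eq, coe_biUnion, mem_coe, Set.mem_iUnion, exists_prop,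
    mem_incidentVars]
  constructor
  · rintro ⟨j, j', hj, hpos, hneg⟩
    exact ⟨j, hj, true, hpos, j', hneg⟩
  · rintro ⟨j, hj, ⟨⟩ | ⟨⟩, hb, j', hj'⟩
    · exact ⟨j', j, mem_component_of_adj hj (adj_of_mem hb hj'), hj', hb⟩
    · exact ⟨j, j', hj, hb, hj'⟩

variable (φ) in
/-- `G(φ)` with parallel edges and loops collapsed, which does not change its components. -/
def graph : SimpleGraph (Fin m) :=
  .fromEdgeSet (Sym2.fromRel (inferInstance : Std.Symm (Adj φ)))

lemma coe_component_eq_supp (i : Fin m) :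
    (component φ i : Set (Fin m)) = ((graph φ).connectedComponentMk i).supp := by
  ext j
  rw [SimpleGraph.ConnectedComponent.mem_supp_iff, SimpleGraph.ConnectedComponent.eq,
    graph, SimpleGraph.reachable_fromEdgeSet_fromRel_eq_reflTransGen, mem_coe, mem_component]
  exact ⟨clauseReach_symm, clauseReach_symm⟩

lemma AtMostTwice.card_edgeSet_induce_le (h : AtMostTwice φ) (K : Set (Fin m)) :
    Nat.card ((graph φ).induce K).edgeSet ≤ (edgeVars φ K).ncard := by
  -- label each edge by a variable joining its ends; the label determines both ends
  have hlabel : ∀ e ∈ ((graph φ).induce K).edgeSet, ∃ x ∈ edgeVars φ K,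
      ∃ a b : K, e = s(a, b) ∧ (x, true) ∈ φ a ∧ (x, false) ∈ φ b := by
    intro e he
    induction e using Sym2.ind with
    | h a b =>
    simp only [SimpleGraph.mem_edgeSet, SimpleGraph.comap_adj, graph,
      SimpleGraph.fromEdgeSet_adj, Sym2.fromRel_prop] at he
    obtain ⟨x, ⟨hpos, hneg⟩ | ⟨hpos, hneg⟩⟩ := he.1
    · exact ⟨x, ⟨a, b, a.2, hpos, hneg⟩, a, b, rfl, hpos, hneg⟩
    · exact ⟨x, ⟨b, a, b.2, hpos, hneg⟩, b, a, Sym2.eq_swap, hpos, hneg⟩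
  choose! f hfK hf using hlabel
  rw [Nat.card_coe_set_eq]
  refine Set.ncard_le_ncard_of_injOn f hfK (fun e he e' he' hee => ?_) (edgeVars_finite K)
  obtain ⟨a, b, rfl, ha, hb⟩ := hf e he
  obtain ⟨a', b', rfl, ha', hb'⟩ := hf e' he'
  rw [hee] at ha hb
  rw [Subtype.ext (h.eq_of_mem ha ha' hb), Subtype.ext (h.eq_of_mem hb hb' ha)]

lemma AtMostTwice.card_component_le (h : AtMostTwice φ) (i : Fin m) :
    (component φ i).card ≤ (edgeVars φ (component φ i)).ncard + 1 := by
  let C := (graph φ).connectedComponentMk i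
  have hC : Nat.card C ≤ Nat.card C.toSimpleGraph.edgeSet + 1 :=
    C.connected_toSimpleGraph.card_vert_le_card_edgeSet_add_one
  have hcard : (component φ i).card = Nat.card C := by
    rw [← Set.ncard_coe_finset, coe_component_eq_supp, ← Nat.card_coe_set_eq]; rfl
  rw [hcard, coe_component_eq_supp]
  exact hC.trans (Nat.add_le_add_right (h.card_edgeSet_induce_le C.supp) 1)

variable (φ) in
/-- For a component `K` of `G(φ)` this says that `K` spans a tree. -/
def IsTree (K : Finset (Fin m)) : Prop :=
  (edgeVars φ K).ncard + 1 = K.card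

variable (φ) in
def IsUntaggedTree (K : Finset (Fin m)) : Prop :=
  (∀ j ∈ K, ¬ Tagged m φ j) ∧ IsTree φ K

lemma AtMostTwice.card_le_card_biUnion_of_satisfied (h : AtMostTwice φ) (β : ℕ → Bool)
    {K : Finset (Fin m)} (hK : ∀ j ∈ K, ¬ Tagged m φ j ∧ ∃ l ∈ φ j, β l.1 = l.2) :
    K.card ≤ (K.biUnion (incidentVars φ)).card := by
  choose! l hl hlβ using fun j hj => (hK j hj).2
  have hcompl : ∀ j ∈ K, ∃ j', ((l j).1, !(l j).2) ∈ φ j' := fun j hj => by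
    have := (hK j hj).1
    simp only [Tagged, not_exists, not_and, not_forall, not_not] at this
    exact this _ (hl j hj)
  refine card_le_card_of_injOn (fun j => (l j).1) (fun j hj => ?_) (fun j hj j' hj' hx => ?_)
  · exact mem_biUnion.2 ⟨j, hj, mem_incidentVars.2 ⟨_, hl j hj, hcompl j hj⟩⟩
  · have hx : (l j).1 = (l j').1 := hx
    have hll : l j' = l j := Prod.ext hx.symm (by rw [← hlβ j hj, ← hlβ j' hj', hx])
    obtain ⟨t, ht⟩ := hcompl j hj
    exact h.eq_of_mem (hl j hj) (hll ▸ hl j' hj') ht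

lemma AtMostTwice.exists_not_satisfied (h : AtMostTwice φ) (β : ℕ → Bool) {i : Fin m}
    (hi : IsUntaggedTree φ (component φ i)) :
    ∃ j ∈ component φ i, ¬ ∃ l ∈ φ j, β l.1 = l.2 := by
  obtain ⟨huntag, htree⟩ := hi
  by_contra! hsat
  have := h.card_le_card_biUnion_of_satisfied β fun j hj => ⟨huntag j hj, hsat j hj⟩
  rw [IsTree, edgeVars_component, Set.ncard_coe_finset] at htree
  omega

lemma AtMostTwice.card_biUnion_incidentVars_eq (h : AtMostTwice φ) {S : Finset (Fin m)}
    {i : Fin m} (hK : component φ i ⊆ S) :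
    (S.biUnion (incidentVars φ)).card = ((component φ i).biUnion (incidentVars φ)).card +
      ((S \ component φ i).biUnion (incidentVars φ)).card := by
  rw [← card_union_of_disjoint, ← union_biUnion, union_sdiff_of_subset hK]
  refine disjoint_left.2 fun x hx hx' => ?_
  obtain ⟨j, hj, hxj⟩ := mem_biUnion.1 hx
  obtain ⟨t, ht, hxt⟩ := mem_biUnion.1 hx'
  obtain ⟨b, hb, -⟩ := mem_incidentVars.1 hxt
  exact (mem_sdiff.1 ht).2 (h.mem_component_of_mem_incidentVars hj hxj hb)

lemma AtMostTwice.card_le_card_biUnion_incidentVars (h : AtMostTwice φ) (S : Finset (Fin m))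
    (hS : ∀ i, component φ i ⊆ S → ¬ IsTree φ (component φ i)) :
    S.card ≤ (S.biUnion (incidentVars φ)).card := by
  induction S using Finset.strongInduction with
  | H S ih =>
  rcases S.eq_empty_or_nonempty with rfl | ⟨i, hi⟩
  · simp
  by_cases hleaf : ∃ x ∈ S.biUnion (incidentVars φ), ∃ i ∈ S,
      ∀ j ∈ S, ∀ b, (x, b) ∈ φ j → j = i
  · obtain ⟨x, hx, i, hi, hxi⟩ := hleaf
    have hsub :
        (S.erase i).biUnion (incidentVars φ) ⊆ (S.biUnion (incidentVars φ)).erase x := by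
      intro y hy
      obtain ⟨j, hj, hyj⟩ := mem_biUnion.1 hy
      obtain ⟨b, hb, -⟩ := mem_incidentVars.1 hyj
      refine mem_erase.2 ⟨?_, mem_biUnion.2 ⟨j, mem_of_mem_erase hj, hyj⟩⟩
      rintro rfl
      exact (mem_erase.1 hj).1 (hxi j (mem_of_mem_erase hj) b hb)
    have := ih _ (erase_ssubset hi) fun j hj => hS j (hj.trans (erase_subset i S))
    have := card_le_card hsub
    have := card_erase_add_one hi
    have := card_erase_add_one hx
    omega
  · push Not at hleaf
    have hclosed : ∀ j ∈ S, ∀ l, Adj φ j l → l ∈ S := by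
      intro j hj l hjl
      obtain ⟨x, b, hb, hl⟩ := adj_iff.1 hjl
      obtain ⟨t, ht, c, hc, htj⟩ :=
        hleaf x (mem_biUnion.2 ⟨j, hj, mem_incidentVars.2 ⟨b, hb, l, hl⟩⟩) j hj
      rcases h.eq_or_eq hb hl hc with rfl | rfl
      · exact absurd rfl htj
      · exact ht
    have hK := component_subset hclosed hi
    have hcomp : (component φ i).card ≤ ((component φ i).biUnion (incidentVars φ)).card := by
      have := h.card_component_le i
      have := hS i hK
      rw [IsTree, edgeVars_component, Set.ncard_coe_finset] at *
      omega
    have := ih _ (sdiff_ssubset hK ⟨i, mem_component_self i⟩)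
      fun j hj => hS j (hj.trans sdiff_subset)
    have := card_sdiff_add_card_eq_card hK
    rw [h.card_biUnion_incidentVars_eq hK]
    omega

lemma exists_satisfying_of_injective {U : Set (Fin m)} (f : U → ℕ) (hf : f.Injective)
    (hfU : ∀ p : U, f p ∈ incidentVars φ p) :
    ∃ β : ℕ → Bool, ∀ i, i ∈ U ∨ Tagged m φ i → ∃ l ∈ φ i, β l.1 = l.2 := by
  choose sign hsign hcompl using fun i => mem_incidentVars.1 (hfU i)
  refine ⟨Function.extend f sign (fun x => decide (∃ j, (x, true) ∈ φ j)), fun i hi => ?_⟩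
  rcases hi with hiU | ⟨⟨x, b⟩, hl, hpure⟩
  · exact ⟨_, hsign ⟨i, hiU⟩, hf.extend_apply _ _ _⟩
  refine ⟨(x, b), hl, ?_⟩
  have hx : ¬ ∃ p, f p = x := by
    rintro ⟨p, rfl⟩
    obtain ⟨j, hj⟩ := hcompl p
    rcases Bool.eq_or_eq_not (sign p) b with hs | hs
    · exact hpure j (hs ▸ hj)
    · exact hpure p (hs ▸ hsign p)
  rw [Function.extend_apply' _ _ _ hx]
  cases b
  · simpa using fun j => hpure j
  · simpa using ⟨i, hl⟩

variable (φ) in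
open Classical in
noncomputable def badComponents : Finset (Finset (Fin m)) :=
  (univ.filter fun i => IsUntaggedTree φ (component φ i)).image (component φ)

lemma mem_badComponents {K : Finset (Fin m)} :
    K ∈ badComponents φ ↔
      ∃ i, IsUntaggedTree φ (component φ i) ∧ component φ i = K := by
  simp [badComponents]

variable (φ) in
lemma ncard_eq_card_badComponents :
    {K : Set (Fin m) | ∃ i, K = {j | ClauseReach m φ i j} ∧ (∀ j ∈ K, ¬ Tagged m φ j) ∧
      (edgeVars φ K).ncard + 1 = K.ncard}.ncard = (badComponents φ).card := by
  rw [← Set.ncard_coe_finset, ← Set.ncard_image_of_injective _ coe_injective]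
  congr 1
  ext K
  simp only [Set.mem_ofPred_eq, Set.mem_image, mem_coe, mem_badComponents, IsUntaggedTree,
    IsTree, ← coe_component]
  constructor
  · rintro ⟨i, rfl, huntag, htree⟩
    exact ⟨_, ⟨i, ⟨huntag, by rwa [Set.ncard_coe_finset] at htree⟩, rfl⟩, rfl⟩
  · rintro ⟨_, ⟨i, ⟨huntag, htree⟩, rfl⟩, rfl⟩
    exact ⟨i, rfl, huntag, by rwa [Set.ncard_coe_finset]⟩

lemma AtMostTwice.card_badComponents_le (h : AtMostTwice φ) (β : ℕ → Bool) :
    (badComponents φ).card ≤ (univ.filter fun i => ¬ ∃ l ∈ φ i, β l.1 = l.2).card := by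
  calc (badComponents φ).card
      ≤ ((univ.filter fun i => ¬ ∃ l ∈ φ i, β l.1 = l.2).image (component φ)).card :=
        card_le_card fun K hK => ?_
    _ ≤ _ := card_image_le
  obtain ⟨i, hi, rfl⟩ := mem_badComponents.1 hK
  obtain ⟨j, hj, hunsat⟩ := h.exists_not_satisfied β hi
  exact mem_image.2 ⟨j, mem_filter.2 ⟨mem_univ j, hunsat⟩, component_eq_of_mem hj⟩

variable (φ) in
lemma exists_transversal_badComponents :
    ∃ T : Finset (Fin m), T.card ≤ (badComponents φ).card ∧
      ∀ K ∈ badComponents φ, ∃ j ∈ K, j ∈ T := by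
  classical
  have hne : ∀ K ∈ badComponents φ, K.Nonempty := fun K hK => by
    obtain ⟨i, -, rfl⟩ := mem_badComponents.1 hK
    exact ⟨i, mem_component_self i⟩
  refine ⟨(badComponents φ).attach.image fun K => (hne K.1 K.2).choose,
    card_image_le.trans card_attach.le, fun K hK => ⟨_, (hne K hK).choose_spec, ?_⟩⟩
  exact mem_image.2 ⟨⟨K, hK⟩, mem_attach _ _, rfl⟩

lemma AtMostTwice.exists_satisfying_outside (h : AtMostTwice φ) (T : Finset (Fin m))
    (hT : ∀ K ∈ badComponents φ, ∃ j ∈ K, j ∈ T) :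
    ∃ β : ℕ → Bool, ∀ i ∉ T, ∃ l ∈ φ i, β l.1 = l.2 := by
  classical
  let U : Set (Fin m) := {i | ¬ Tagged m φ i ∧ i ∉ T}
  have hall : ∀ s : Finset U, s.card ≤ (s.biUnion fun p => incidentVars φ p).card := by
    intro s
    have := h.card_le_card_biUnion_incidentVars (s.image (↑)) fun i hi htree => by
      have hU : ∀ j ∈ component φ i, j ∈ U := fun j hj => by
        obtain ⟨p, -, rfl⟩ := mem_image.1 (hi hj)
        exact p.2
      obtain ⟨j, hj, hjT⟩ :=
        hT _ (mem_badComponents.2 ⟨i, ⟨fun j hj => (hU j hj).1, htree⟩, rfl⟩)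
      exact (hU j hj).2 hjT
    rwa [card_image_of_injective _ Subtype.val_injective, image_biUnion] at this
  obtain ⟨f, hf, hfU⟩ := (all_card_le_biUnion_card_iff_exists_injective _).1 hall
  obtain ⟨β, hβ⟩ := exists_satisfying_of_injective f hf hfU
  refine ⟨β, fun i hi => hβ i ?_⟩
  by_cases ht : Tagged m φ i
  · exact .inr ht
  · exact .inl ⟨ht, hi⟩

lemma AtMostTwice.exists_card_not_satisfied_le (h : AtMostTwice φ) :
    ∃ β : ℕ → Bool,
      (univ.filter fun i => ¬ ∃ l ∈ φ i, β l.1 = l.2).card ≤ (badComponents φ).card := by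
  obtain ⟨T, hTcard, hT⟩ := exists_transversal_badComponents φ
  obtain ⟨β, hβ⟩ := h.exists_satisfying_outside T hT
  refine ⟨β, le_trans (card_le_card fun i hi => ?_) hTcard⟩
  by_contra hiT
  exact (mem_filter.1 hi).2 (hβ i hiT)

end CNF2

theorem cnf2_maxsat_general (m : ℕ) (φ : Fin m → Finset (ℕ × Bool))
    (hocc : ∀ x : ℕ,
      ((Finset.univ : Finset (Fin m × Bool)).filter
        (fun p => (x, p.2) ∈ φ p.1)).card ≤ 2)
    (k : ℕ)
    (hk : k = Set.ncard {K : Set (Fin m) | ∃ i : Fin m,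
        K = {j | ClauseReach m φ i j} ∧
        (∀ j ∈ K, ¬ Tagged m φ j) ∧
        Set.ncard {x : ℕ | ∃ i' j' : Fin m,
            i' ∈ K ∧ (x, true) ∈ φ i' ∧ (x, false) ∈ φ j'} + 1 =
          Set.ncard K}) :
    (∃ β : ℕ → Bool,
      (Finset.univ.filter (fun i => ∃ l ∈ φ i, β l.1 = l.2)).card = m - k) ∧
    (∀ β : ℕ → Bool,
      (Finset.univ.filter (fun i => ∃ l ∈ φ i, β l.1 = l.2)).card ≤ m - k) := by
  have hφ : CNF2.AtMostTwice φ := hocc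
  replace hk : k = (CNF2.badComponents φ).card := hk.trans (CNF2.ncard_eq_card_badComponents φ)
  have hcount (β : ℕ → Bool) : (univ.filter fun i => ∃ l ∈ φ i, β l.1 = l.2).card +
      (univ.filter fun i => ¬ ∃ l ∈ φ i, β l.1 = l.2).card = m := by
    rw [card_filter_add_card_filter_not, card_univ, Fintype.card_fin]
  obtain ⟨β, hβ⟩ := hφ.exists_card_not_satisfied_le
  refine ⟨⟨β, ?_⟩, fun β' => ?_⟩
  · have := hφ.card_badComponents_le β
    have := hcount β
    omega
  · have := hφ.card_badComponents_le β'
    have := hcount β'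
    omega

/-- Let `φ` be a CNF(2) formula (no empty clauses, every variable has
at most two occurrences in total) with `m` clauses, and let `k` be the number of
connected components of the multigraph `G(φ)` (vertices: clauses; one edge per
variable occurring both positively and negatively) that are trees (#edges =
#vertices − 1) containing no tagged clause.  Then the maximum number of clauses
simultaneously satisfiable is exactly `m − k`. -/
theorem cnf2_maxsat (m : ℕ) (φ : Fin m → Finset (ℕ × Bool))
    (hne : ∀ i, φ i ≠ ∅)
    (hocc : ∀ x : ℕ,
      ((Finset.univ : Finset (Fin m × Bool)).filter
        (fun p => (x, p.2) ∈ φ p.1)).card ≤ 2)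
    (k : ℕ)
    (hk : k = Set.ncard {K : Set (Fin m) | ∃ i : Fin m,
        K = {j | ClauseReach m φ i j} ∧
        (∀ j ∈ K, ¬ Tagged m φ j) ∧
        Set.ncard {x : ℕ | ∃ i' j' : Fin m,
            i' ∈ K ∧ (x, true) ∈ φ i' ∧ (x, false) ∈ φ j'} + 1 =
          Set.ncard K}) :
    (∃ β : ℕ → Bool,
      (Finset.univ.filter (fun i => ∃ l ∈ φ i, β l.1 = l.2)).card = m - k) ∧
    (∀ β : ℕ → Bool,
      (Finset.univ.filter (fun i => ∃ l ∈ φ i, β l.1 = l.2)).card ≤ m - k) :=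
  cnf2_maxsat_general m φ hocc k hk
end

section
/- Let G = (V,E) be a graph, H its Hochbaum network, f a maximum s-t flow in H (unit capacities), and X ⊆ V(H) the set of vertices reachable from s in the residual graph R_f. Define α(v) = 0 if v₁ ∈ X and v₂ ∉ X; α(v) = 1 if v₁ ∉ X and v₂ ∈ X; and α(v) = 1/2 otherwise. Then α is a feasible solution of the vertex cover LP of G, i.e., α(u) + α(v) ≥ 1 for every edge {u,v} ∈ E. -/
open Classical in
lemma hochbaum_claimA {V : Type} [Fintype V] [DecidableEq V]
    (G : SimpleGraph V)
    (f : (V × Bool ⊕ Bool) → (V × Bool ⊕ Bool) → ℚ)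
    (hsupp : ∀ a b, ¬ HochbaumEdge G a b → f a b = 0)
    (hnonneg : ∀ a b, 0 ≤ f a b) (hcap : ∀ a b, f a b ≤ 1)
    (hcons : ∀ a, a ≠ Sum.inr false → a ≠ Sum.inr true →
      ∑ b, f b a = ∑ b, f a b)
    {u v : V} (huv : G.Adj u v)
    (hu : Relation.ReflTransGen
      (fun a b => (HochbaumEdge G a b ∧ f a b < 1) ∨
                  (HochbaumEdge G b a ∧ 0 < f b a)) (Sum.inr false)
      (Sum.inl (u, false))) :
    Relation.ReflTransGen
      (fun a b => (HochbaumEdge G a b ∧ f a b < 1) ∨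
                  (HochbaumEdge G b a ∧ 0 < f b a)) (Sum.inr false)
      (Sum.inl (v, true)) := by
  set step : (V × Bool ⊕ Bool) → (V × Bool ⊕ Bool) → Prop :=
    fun a b => (HochbaumEdge G a b ∧ f a b < 1) ∨
               (HochbaumEdge G b a ∧ 0 < f b a) with hstep
  by_contra hv2
  set u1 : V × Bool ⊕ Bool := Sum.inl (u, false)
  set v2 : V × Bool ⊕ Bool := Sum.inl (v, true)
  have hedge : HochbaumEdge G u1 v2 := Or.inr (Or.inr ⟨u, v, huv, rfl, rfl⟩)
  -- f u1 v2 = 1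
  have hf1 : f u1 v2 = 1 := by
    by_contra h
    have hlt : f u1 v2 < 1 := lt_of_le_of_ne (hcap _ _) h
    exact hv2 (hu.tail (Or.inl ⟨hedge, hlt⟩))
  -- incoming sum at u1 is just f s u1
  have hin : ∑ b, f b u1 = f (Sum.inr false) u1 := by
    apply Finset.sum_eq_single
    · intro b _ hb
      apply hsupp
      rintro (⟨w, rfl, h2⟩ | ⟨w, h1, h2⟩ | ⟨w, x, _, h1, h2⟩)
      · exact hb rfl
      · simp [u1] at h2
      · simp [u1] at h2
    · intro h; exact absurd (Finset.mem_univ _) h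
  -- outgoing sum ≥ 1
  have hout_ge : (1 : ℚ) ≤ ∑ b, f u1 b := by
    calc (1:ℚ) = f u1 v2 := hf1.symm
    _ ≤ ∑ b, f u1 b :=
      Finset.single_le_sum (fun b _ => hnonneg u1 b) (Finset.mem_univ v2)
  have hconsu : ∑ b, f b u1 = ∑ b, f u1 b := by
    apply hcons <;> simp [u1]
  have hout_le : ∑ b, f u1 b ≤ 1 := by
    rw [← hconsu, hin]; exact hcap _ _
  -- all other outgoing flow is zero
  have hzero : ∀ b, b ≠ v2 → f u1 b = 0 := by
    intro b hb
    have hsplit : f u1 v2 + ∑ c ∈ Finset.univ.erase v2, f u1 c = ∑ c, f u1 c :=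
      Finset.add_sum_erase _ _ (Finset.mem_univ v2)
    have hrest : ∑ c ∈ Finset.univ.erase v2, f u1 c ≤ 0 := by
      have := hout_le
      rw [← hsplit, hf1] at this
      linarith
    have hle : f u1 b ≤ ∑ c ∈ Finset.univ.erase v2, f u1 c :=
      Finset.single_le_sum (fun c _ => hnonneg u1 c)
        (Finset.mem_erase.mpr ⟨hb, Finset.mem_univ b⟩)
    exact le_antisymm (hle.trans hrest) (hnonneg _ _)
  -- f s u1 = 1
  have hfs : f (Sum.inr false) u1 = 1 := by
    have := hconsu
    rw [hin] at this
    exact le_antisymm (hcap _ _) (this ▸ hout_ge)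
  -- analyze last step of path to u1
  rcases hu.cases_tail with heq | ⟨c, hcX, hstepc⟩
  · simp [u1] at heq
  · rcases hstepc with ⟨hedge', hlt⟩ | ⟨hedge', hpos⟩
    · -- forward residual edge c → u1 : c must be s
      have : c = Sum.inr false := by
        rcases hedge' with ⟨w, rfl, h2⟩ | ⟨w, h1, h2⟩ | ⟨w, x, _, h1, h2⟩
        · rfl
        · simp [u1] at h2
        · simp [u1] at h2
      rw [this, hfs] at hlt
      exact absurd hlt (by norm_num)
    · -- reverse residual edge: f u1 c > 0 so c = v2
      have : c = v2 := by
        by_contra h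
        rw [hzero c h] at hpos
        exact absurd hpos (by norm_num)
      exact hv2 (this ▸ hcX)


open Classical in
/-- Let `f` be a maximum `s`-`t` flow (unit capacities) in the
Hochbaum network of `G`, and `X` the set of vertices reachable from `s` in the
residual graph (unsaturated edges plus reversals of edges carrying flow).  Then the
assignment `α(v) = 0` if `v₁ ∈ X, v₂ ∉ X`; `α(v) = 1` if `v₁ ∉ X, v₂ ∈ X`; and
`α(v) = 1/2` otherwise, is a feasible solution of the vertex cover LP of `G`. -/
theorem hochbaum_residual_gives_vc_lp {V : Type} [Fintype V] [DecidableEq V]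
    (G : SimpleGraph V)
    (f : (V × Bool ⊕ Bool) → (V × Bool ⊕ Bool) → ℚ)
    (hsupp : ∀ a b, ¬ HochbaumEdge G a b → f a b = 0)
    (hnonneg : ∀ a b, 0 ≤ f a b) (hcap : ∀ a b, f a b ≤ 1)
    (hcons : ∀ a, a ≠ Sum.inr false → a ≠ Sum.inr true →
      ∑ b, f b a = ∑ b, f a b)
    (hmax : ∀ f' : (V × Bool ⊕ Bool) → (V × Bool ⊕ Bool) → ℚ,
      (∀ a b, ¬ HochbaumEdge G a b → f' a b = 0) →
      (∀ a b, 0 ≤ f' a b) → (∀ a b, f' a b ≤ 1) →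
      (∀ a, a ≠ Sum.inr false → a ≠ Sum.inr true →
        ∑ b, f' b a = ∑ b, f' a b) →
      ∑ b, f' (Sum.inr false) b ≤ ∑ b, f (Sum.inr false) b) :
    letI X : Set (V × Bool ⊕ Bool) := {a | Relation.ReflTransGen
      (fun a b => (HochbaumEdge G a b ∧ f a b < 1) ∨
                  (HochbaumEdge G b a ∧ 0 < f b a)) (Sum.inr false) a}
    letI α : V → ℚ := fun v =>
      if Sum.inl (v, false) ∈ X ∧ Sum.inl (v, true) ∉ X then 0
      else if Sum.inl (v, false) ∉ X ∧ Sum.inl (v, true) ∈ X then 1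
      else 1/2
    (∀ v, 0 ≤ α v ∧ α v ≤ 1) ∧ (∀ u v, G.Adj u v → 1 ≤ α u + α v) := by
  constructor
  · intro v
    simp only []
    split_ifs <;> norm_num
  · intro u v huv
    have F1 : Relation.ReflTransGen
        (fun a b => (HochbaumEdge G a b ∧ f a b < 1) ∨
          (HochbaumEdge G b a ∧ 0 < f b a)) (Sum.inr false) (Sum.inl (u, false)) →
        Relation.ReflTransGen
        (fun a b => (HochbaumEdge G a b ∧ f a b < 1) ∨
          (HochbaumEdge G b a ∧ 0 < f b a)) (Sum.inr false) (Sum.inl (v, true)) :=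
      fun h => hochbaum_claimA G f hsupp hnonneg hcap hcons huv h
    have F2 : Relation.ReflTransGen
        (fun a b => (HochbaumEdge G a b ∧ f a b < 1) ∨
          (HochbaumEdge G b a ∧ 0 < f b a)) (Sum.inr false) (Sum.inl (v, false)) →
        Relation.ReflTransGen
        (fun a b => (HochbaumEdge G a b ∧ f a b < 1) ∨
          (HochbaumEdge G b a ∧ 0 < f b a)) (Sum.inr false) (Sum.inl (u, true)) :=
      fun h => hochbaum_claimA G f hsupp hnonneg hcap hcons huv.symm h
    simp only [Set.mem_setOf_eq]
    split_ifs with h1 h2 h3 h4 h5 h6 h7 h8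
    · exact absurd (F2 h2.1) h1.2
    · norm_num
    · -- h1 : u1∈X ∧ u2∉X ; h2 : ¬(v1∈X ∧ v2∉X) ; h3 : ¬(v1∉X ∧ v2∈X)
      exfalso
      have hv2 := F1 h1.1
      have hv1 : Relation.ReflTransGen
          (fun a b => (HochbaumEdge G a b ∧ f a b < 1) ∨
            (HochbaumEdge G b a ∧ 0 < f b a)) (Sum.inr false) (Sum.inl (v, false)) := by
        by_contra h
        exact h3 ⟨h, hv2⟩
      exact h1.2 (F2 hv1)
    · norm_num
    · norm_num
    · norm_num
    · -- h1 : ¬(u1∈X ∧ u2∉X) ; h4 : ¬(u1∉X ∧ u2∈X) ; h7 : v1∈X ∧ v2∉X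
      exfalso
      have hu2 := F2 h7.1
      have hu1 : Relation.ReflTransGen
          (fun a b => (HochbaumEdge G a b ∧ f a b < 1) ∨
            (HochbaumEdge G b a ∧ 0 < f b a)) (Sum.inr false) (Sum.inl (u, false)) := by
        by_contra h
        exact h4 ⟨h, hu2⟩
      exact h7.2 (F1 hu1)
    · norm_num
    · norm_num
end
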